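/- arXiv:2508.16353 — 4 statements merged into one kernel-verified Lean document; each statement's English description precedes it below -/
import Mathlib

section
/- Upper bound for the first excited energy: for all sufficiently large k, λ_1(V_k, α) ≤ max{ λ_0(V_{k+r_min}, ∞δ_0), λ_0(V_{k-r_max}, ∞δ_0) }, where r_min = min J and r_max = max J. -/
/-!
Take as trial functions the Dirichlet ground states of the two potential-free end segments
`{-k, …, r_min - 1}` and `{r_max + 1, …, k}`: on a segment of `p` sites this is
`m ↦ cos ((m + 1/2) π / (2p + 1))`, with `m` the distance from the outer end, of energy
`2 - 2 cos (π / (2p + 1))`. They live on non-adjacent vertex sets where `α` vanishes, so on their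
span the quadratic form of `H_{k,α}` is at most the larger of the two energies. Since `H_{k,α}` is
a Jacobi matrix, an eigenvector is determined by its value at the left endpoint, so the ground
state is simple and some nonzero vector of the span is orthogonal to it; its Rayleigh quotient
bounds `λ_1` from above.
-/

open Finset Filter Topology Matrix

/-- The (Neumann) discrete Laplacian matrix of the path graph with `n` vertices. -/
noncomputable def pathLap (n : ℕ) : Matrix (Fin n) (Fin n) ℝ :=
  Matrix.of fun i j =>
    if i = j then (if i.val = 0 ∨ i.val = n - 1 then (1 : ℝ) else 2)
    else if i.val + 1 = j.val ∨ j.val + 1 = i.val then -1 else 0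

/-- The diagonal potential matrix: vertex `i` of `Fin (2k+1)` represents the integer `i - k`. -/
noncomputable def potMat (k : ℕ) (α : ℤ → ℝ) : Matrix (Fin (2*k+1)) (Fin (2*k+1)) ℝ :=
  Matrix.diagonal fun i => α ((i : ℤ) - k)

/-- The discrete Schrödinger operator `H_{k,α} = L_k + Σ_j α_j δ_j` on the path `{-k,…,k}`. -/
noncomputable def Hmat (k : ℕ) (α : ℤ → ℝ) : Matrix (Fin (2*k+1)) (Fin (2*k+1)) ℝ :=
  pathLap (2*k+1) + potMat k α

/-- The set of eigenvalues of a real matrix. -/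
def evs {n : ℕ} (M : Matrix (Fin n) (Fin n) ℝ) : Set ℝ :=
  {μ | ∃ f : Fin n → ℝ, f ≠ 0 ∧ M.mulVec f = μ • f}

/-- Lowest eigenvalue. -/
noncomputable def lam0 {n : ℕ} (M : Matrix (Fin n) (Fin n) ℝ) : ℝ := sInf (evs M)

/-- Second-lowest eigenvalue (lowest eigenvalue above the ground state energy). -/
noncomputable def lam1 {n : ℕ} (M : Matrix (Fin n) (Fin n) ℝ) : ℝ :=
  sInf (evs M \ {lam0 M})

/-- Spectral gap. -/
noncomputable def gap {n : ℕ} (M : Matrix (Fin n) (Fin n) ℝ) : ℝ := lam1 M - lam0 M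

/-- `λ_0(V_m, ∞δ_0) = 2 - 2cos(π/(2m+1))`, the Dirichlet ground state energy. -/
noncomputable def dirEVZ (m : ℤ) : ℝ := 2 - 2 * Real.cos (Real.pi / (2 * m + 1))

/-- Index of the integer vertex `j ∈ {-k,…,k}` inside `Fin (2k+1)`. -/
def idx (k : ℕ) (j : ℤ) : Fin (2*k+1) := ⟨(j + k).toNat % (2*k+1), Nat.mod_lt _ (by omega)⟩

/-- `φ` is the normalized strictly positive ground state of `H_{k,α}`. -/
noncomputable def isGS (k : ℕ) (α : ℤ → ℝ) (φ : Fin (2*k+1) → ℝ) : Prop :=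
  (Hmat k α).mulVec φ = lam0 (Hmat k α) • φ ∧ (∑ i, φ i ^ 2 = 1) ∧ ∀ i, 0 < φ i

/-- The single-site potential `α δ_0`. -/
noncomputable def single0 (α : ℝ) : ℤ → ℝ := fun j => if j = 0 then α else 0

section LinearAlgebra

variable {n : ℕ} {A : Matrix (Fin n) (Fin n) ℝ}

variable (A) in
lemma evs_subset_spectrum : evs A ⊆ spectrum ℝ A := by
  rintro μ ⟨f, hf0, hf⟩
  rw [spectrum.mem_iff, Matrix.isUnit_iff_isUnit_det, isUnit_iff_ne_zero]
  intro hunit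
  refine hf0 (eq_zero_of_mulVec_eq_zero hunit ?_)
  rw [sub_mulVec, hf, Algebra.algebraMap_eq_smul_one, smul_mulVec, one_mulVec, sub_self]

variable (A) in
lemma bddBelow_evs : BddBelow (evs A) :=
  (finite_real_spectrum.subset (evs_subset_spectrum A)).bddBelow

lemma dotProduct_self_nonneg (w : Fin n → ℝ) : 0 ≤ w ⬝ᵥ w :=
  Finset.sum_nonneg fun i _ => mul_self_nonneg (w i)

lemma dotProduct_self_pos {w : Fin n → ℝ} (hw : w ≠ 0) : 0 < w ⬝ᵥ w :=
  (dotProduct_self_nonneg w).lt_of_ne' (dotProduct_self_eq_zero.not.mpr hw)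

lemma dotProduct_eq_zero_of_forall_ne_zero {u w : Fin n → ℝ} (h : ∀ i, u i ≠ 0 → w i = 0) :
    u ⬝ᵥ w = 0 :=
  Finset.sum_eq_zero fun i _ => by by_cases hi : u i = 0 <;> simp [hi, h]

lemma dotProduct_mulVec_self_eq_of_forall_ne_zero {u : Fin n → ℝ} {μ : ℝ}
    (h : ∀ i, u i ≠ 0 → (A *ᵥ u) i = μ * u i) : u ⬝ᵥ A *ᵥ u = μ * (u ⬝ᵥ u) := by
  simp only [dotProduct, Finset.mul_sum]
  refine Finset.sum_congr rfl fun i _ => ?_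
  by_cases hi : u i = 0
  · simp [hi]
  · rw [h i hi]; ring

lemma Matrix.IsHermitian.dotProduct_mulVec_comm (hA : A.IsHermitian) (x y : Fin n → ℝ) :
    x ⬝ᵥ A *ᵥ y = y ⬝ᵥ A *ᵥ x := by
  rw [dotProduct_mulVec, ← mulVec_transpose, ← conjTranspose_eq_transpose_of_trivial, hA.eq,
    dotProduct_comm]

lemma Matrix.IsHermitian.dotProduct_self_eq_sum (hA : A.IsHermitian) (w : Fin n → ℝ) :
    w ⬝ᵥ w = ∑ i, (⇑(hA.eigenvectorBasis i) ⬝ᵥ w) ^ 2 := by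
  have := hA.eigenvectorBasis.sum_inner_mul_inner (WithLp.toLp 2 w) (WithLp.toLp 2 w)
  simp only [EuclideanSpace.inner_eq_star_dotProduct, star_trivial, dotProduct_comm w,
    ← sq] at this
  exact this.symm

lemma Matrix.IsHermitian.dotProduct_mulVec_self_eq_sum (hA : A.IsHermitian) (w : Fin n → ℝ) :
    w ⬝ᵥ A *ᵥ w = ∑ i, hA.eigenvalues i * (⇑(hA.eigenvectorBasis i) ⬝ᵥ w) ^ 2 := by
  have := hA.eigenvectorBasis.sum_inner_mul_inner (WithLp.toLp 2 w) (WithLp.toLp 2 (A *ᵥ w))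
  simp only [EuclideanSpace.inner_eq_star_dotProduct, star_trivial] at this
  rw [dotProduct_comm, ← this]
  refine Finset.sum_congr rfl fun i _ => ?_
  rw [dotProduct_comm (A *ᵥ w), hA.dotProduct_mulVec_comm, hA.mulVec_eigenvectorBasis,
    dotProduct_smul, smul_eq_mul, dotProduct_comm w]
  ring

lemma lam1_mul_dotProduct_self_le (hA : A.IsHermitian) {w : Fin n → ℝ}
    (hw : ∀ f, A *ᵥ f = lam0 A • f → f ⬝ᵥ w = 0) :
    lam1 A * (w ⬝ᵥ w) ≤ w ⬝ᵥ A *ᵥ w := by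
  rw [hA.dotProduct_self_eq_sum, hA.dotProduct_mulVec_self_eq_sum, Finset.mul_sum]
  refine Finset.sum_le_sum fun i _ => ?_
  by_cases hi : hA.eigenvalues i = lam0 A
  · rw [hw _ (hi ▸ hA.mulVec_eigenvectorBasis i)]
    simp
  · have hmem : hA.eigenvalues i ∈ evs A \ {lam0 A} :=
      ⟨⟨_, fun h => hA.eigenvectorBasis.orthonormal.ne_zero i (by simpa using h),
        hA.mulVec_eigenvectorBasis i⟩, hi⟩
    gcongr
    exact csInf_le ((bddBelow_evs A).mono Set.sdiff_subset) hmem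

lemma eq_smul_of_mulVec_eq_smul {μ : ℝ} {i₀ : Fin n}
    (hsimple : ∀ f, A *ᵥ f = μ • f → f i₀ = 0 → f = 0) {f g : Fin n → ℝ}
    (hf : A *ᵥ f = μ • f) (hg : A *ᵥ g = μ • g) (hg0 : g ≠ 0) :
    f = (f i₀ / g i₀) • g := by
  have hgi₀ : g i₀ ≠ 0 := fun h => hg0 (hsimple g hg h)
  refine sub_eq_zero.mp (hsimple _ ?_ ?_)
  · rw [mulVec_sub, mulVec_smul, hf, hg, smul_comm, smul_sub]
  · simp [hgi₀]

lemma exists_combination_orthogonal_eigenvectors {μ : ℝ} {i₀ : Fin n}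
    (hsimple : ∀ f, A *ᵥ f = μ • f → f i₀ = 0 → f = 0) (u v : Fin n → ℝ) :
    ∃ s t : ℝ, (s ≠ 0 ∨ t ≠ 0) ∧ ∀ f, A *ᵥ f = μ • f → f ⬝ᵥ (s • u + t • v) = 0 := by
  by_cases hex : ∃ g, A *ᵥ g = μ • g ∧ g ≠ 0
  · obtain ⟨g, hg, hg0⟩ := hex
    have hdot (f : Fin n → ℝ) (hf : A *ᵥ f = μ • f) (x : Fin n → ℝ) :
        f ⬝ᵥ x = f i₀ / g i₀ * (g ⬝ᵥ x) := by
      rw [← smul_eq_mul, ← smul_dotProduct, ← eq_smul_of_mulVec_eq_smul hsimple hf hg hg0]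
    by_cases hgu : g ⬝ᵥ u = 0
    · exact ⟨1, 0, Or.inl one_ne_zero, fun f hf => by simp [hdot f hf, hgu]⟩
    · refine ⟨g ⬝ᵥ v, -(g ⬝ᵥ u), Or.inr (neg_ne_zero.mpr hgu), fun f hf => ?_⟩
      rw [hdot f hf, dotProduct_add, dotProduct_smul, dotProduct_smul, smul_eq_mul, smul_eq_mul]
      ring
  · push Not at hex
    exact ⟨1, 0, Or.inl one_ne_zero, fun f hf => by simp [hex f hf]⟩

lemma lam1_le_of_orthogonal_pair (hA : A.IsHermitian) {i₀ : Fin n}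
    (hsimple : ∀ f, A *ᵥ f = lam0 A • f → f i₀ = 0 → f = 0) {u v : Fin n → ℝ}
    (hu0 : u ≠ 0) (hv0 : v ≠ 0) (huv : u ⬝ᵥ v = 0) (hAuv : u ⬝ᵥ A *ᵥ v = 0) {c : ℝ}
    (hu : u ⬝ᵥ A *ᵥ u ≤ c * (u ⬝ᵥ u)) (hv : v ⬝ᵥ A *ᵥ v ≤ c * (v ⬝ᵥ v)) :
    lam1 A ≤ c := by
  obtain ⟨s, t, hst, hw⟩ := exists_combination_orthogonal_eigenvectors hsimple u v
  set w := s • u + t • v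
  have hww : w ⬝ᵥ w = s ^ 2 * (u ⬝ᵥ u) + t ^ 2 * (v ⬝ᵥ v) := by
    simp only [w, add_dotProduct, dotProduct_add, smul_dotProduct, dotProduct_smul, smul_eq_mul,
      dotProduct_comm v u, huv]
    ring
  have hwAw : w ⬝ᵥ A *ᵥ w = s ^ 2 * (u ⬝ᵥ A *ᵥ u) + t ^ 2 * (v ⬝ᵥ A *ᵥ v) := by
    simp only [w, mulVec_add, mulVec_smul, add_dotProduct, dotProduct_add, smul_dotProduct,
      dotProduct_smul, smul_eq_mul, hA.dotProduct_mulVec_comm v u, hAuv]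
    ring
  have hww_pos : 0 < w ⬝ᵥ w := by
    have := dotProduct_self_pos hu0
    have := dotProduct_self_pos hv0
    rw [hww]
    rcases hst with h | h <;> positivity
  refine le_of_mul_le_mul_right ?_ hww_pos
  calc lam1 A * (w ⬝ᵥ w) ≤ w ⬝ᵥ A *ᵥ w := lam1_mul_dotProduct_self_le hA hw
    _ ≤ s ^ 2 * (c * (u ⬝ᵥ u)) + t ^ 2 * (c * (v ⬝ᵥ v)) := by rw [hwAw]; gcongr
    _ = c * (w ⬝ᵥ w) := by rw [hww]; ring

end LinearAlgebra

section PathLaplacian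

variable {n : ℕ}

lemma sum_fin_ite_val_eq (m : ℕ) (G : ℕ → ℝ) :
    ∑ j : Fin n, (if (j : ℕ) = m then G j else 0) = if m < n then G m else 0 := by
  rw [Fin.sum_univ_eq_sum_range (fun j => if j = m then G j else 0)]
  simp

lemma pathLap_mulVec_apply (F : ℕ → ℝ) (i : Fin n) :
    (pathLap n *ᵥ fun j => F j) i =
      (if (i : ℕ) = 0 ∨ (i : ℕ) = n - 1 then 1 else 2) * F i
        - (if (i : ℕ) + 1 < n then F (i + 1) else 0)
        - (if (i : ℕ) ≠ 0 then F (i - 1) else 0) := by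
  have hterm (j : Fin n) : pathLap n i j * F j =
      (if (j : ℕ) = i then (if (i : ℕ) = 0 ∨ (i : ℕ) = n - 1 then 1 else 2) * F j else 0)
        - (if (j : ℕ) = i + 1 then F j else 0)
        - (if (j : ℕ) = i - 1 then (if (i : ℕ) ≠ 0 then F j else 0) else 0) := by
    simp only [pathLap, of_apply, ← Fin.val_inj]
    split_ifs <;> first | (exfalso; omega) | ring
  simp only [mulVec, dotProduct, hterm, Finset.sum_sub_distrib]
  rw [sum_fin_ite_val_eq _ (fun m => _ * F m), sum_fin_ite_val_eq,
    sum_fin_ite_val_eq _ (fun m => if (i : ℕ) ≠ 0 then F m else 0), if_pos i.isLt,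
    if_pos (show (i : ℕ) - 1 < n by omega)]

lemma eq_zero_of_pathLap_add_diagonal_mulVec_eq_smul [NeZero n] {d : Fin n → ℝ} {μ : ℝ}
    {f : Fin n → ℝ} (hf : (pathLap n + diagonal d) *ᵥ f = μ • f) (h0 : f 0 = 0) : f = 0 := by
  set F : ℕ → ℝ := fun m => if h : m < n then f ⟨m, h⟩ else 0
  have hfF : f = fun j : Fin n => F j := funext fun j => by simp [F, j.isLt]
  have hnext (m : ℕ) (hm : F m = 0) (hprev : m ≠ 0 → F (m - 1) = 0) : F (m + 1) = 0 := by
    by_cases hlt : m + 1 < n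
    · have hrow := congrFun hf ⟨m, by omega⟩
      rw [hfF, add_mulVec, Pi.add_apply, pathLap_mulVec_apply, mulVec_diagonal] at hrow
      rcases eq_or_ne m 0 with rfl | hm0
      · simpa [hm, hlt] using hrow
      · simpa [hm, hprev hm0, hlt, hm0] using hrow
    · simp [F, hlt]
  have key (m : ℕ) : F m = 0 ∧ F (m + 1) = 0 := by
    induction m with
    | zero =>
      have hF0 : F 0 = 0 := by simpa [F, Nat.pos_of_neZero n] using h0
      exact ⟨hF0, hnext 0 hF0 (absurd rfl)⟩
    | succ m ih => exact ⟨ih.2, hnext (m + 1) ih.2 fun _ => ih.1⟩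
  exact hfF.trans (funext fun j => (key j).1)

lemma pathLap_submatrix_rev : (pathLap n).submatrix Fin.rev Fin.rev = pathLap n := by
  ext i j
  simp only [submatrix_apply, pathLap, of_apply, ← Fin.val_inj, Fin.val_rev]
  split_ifs <;> first | rfl | (exfalso; omega)

lemma pathLap_mulVec_comp_rev (f : Fin n → ℝ) :
    pathLap n *ᵥ (f ∘ Fin.rev) = (pathLap n *ᵥ f) ∘ Fin.rev := by
  conv_lhs => rw [← pathLap_submatrix_rev]
  exact (submatrix_mulVec_equiv (pathLap n) (f ∘ Fin.rev) Fin.rev Fin.revPerm).trans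
    (by simp [Function.comp_def])

lemma isHermitian_pathLap : (pathLap n).IsHermitian := by
  ext i j
  simp only [conjTranspose_apply, star_trivial, pathLap, of_apply, ← Fin.val_inj]
  split_ifs <;> first | rfl | (exfalso; omega)

end PathLaplacian

section DirichletMode

open Real

/-- With `θ = π / (2p + 1)`, `u(m) = cos ((m + 1/2) θ)` solves
`2u(m) - u(m-1) - u(m+1) = (2 - 2cos θ) u(m)`, satisfies the Neumann condition `u(-1) = u(0)`
and vanishes at `m = p`. -/
noncomputable def dirichletMode (p m : ℕ) : ℝ :=
  if m < p then cos ((m + 1 / 2) * (π / (2 * p + 1))) else 0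

variable {p : ℕ}

lemma dirichletMode_eq_cos {m : ℕ} (hm : m ≤ p) :
    dirichletMode p m = cos ((m + 1 / 2) * (π / (2 * p + 1))) := by
  rcases hm.lt_or_eq with hlt | rfl
  · rw [dirichletMode, if_pos hlt]
  · have hpi : ((m : ℝ) + 1 / 2) * (π / (2 * m + 1)) = π / 2 := by field_simp
    rw [dirichletMode, if_neg (lt_irrefl m), hpi, cos_pi_div_two]

lemma dirichletMode_eq_zero {m : ℕ} (hm : p ≤ m) : dirichletMode p m = 0 :=
  if_neg hm.not_gt

lemma dirichletMode_zero_pos (hp : 0 < p) : 0 < dirichletMode p 0 := by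
  rw [dirichletMode, if_pos hp, Nat.cast_zero, zero_add]
  have hθ : 0 < π / (2 * p + 1) := by positivity
  have hp' : (1 : ℝ) ≤ p := by exact_mod_cast hp
  have hθπ : π / (2 * p + 1) < π := div_lt_self pi_pos (by linarith)
  apply cos_pos_of_mem_Ioo
  constructor <;> linarith

lemma pathLap_mulVec_dirichletMode {n : ℕ} (hpn : p < n) (i : Fin n) (hi : (i : ℕ) ≠ p) :
    (pathLap n *ᵥ fun j => dirichletMode p j) i = dirEVZ p * dirichletMode p i := by
  rw [pathLap_mulVec_apply]
  rcases hi.lt_or_gt with hlt | hgt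
  · have hdir : dirEVZ p = 2 - 2 * cos (π / (2 * p + 1)) := by simp [dirEVZ]
    rw [if_pos (show (i : ℕ) + 1 < n by omega), dirichletMode_eq_cos hlt.le,
      dirichletMode_eq_cos (show (i : ℕ) + 1 ≤ p by omega),
      dirichletMode_eq_cos (show (i : ℕ) - 1 ≤ p by omega), hdir]
    generalize π / (2 * p + 1) = θ
    have hcos (x : ℝ) : cos (x + θ) + cos (x - θ) = 2 * cos θ * cos x := by
      rw [cos_add, cos_sub]; ring
    rcases Nat.eq_zero_or_pos i with h0 | hpos
    · have h := hcos (1 / 2 * θ)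
      rw [show 1 / 2 * θ - θ = -(1 / 2 * θ) by ring, cos_neg,
        show 1 / 2 * θ + θ = (1 + 1 / 2) * θ by ring] at h
      simp only [h0, true_or, ite_true, ne_eq, not_true_eq_false, ite_false, Nat.cast_zero,
        zero_add, Nat.cast_one, one_mul, sub_zero]
      linarith
    · have h := hcos ((i + 1 / 2) * θ)
      rw [show ((i : ℝ) + 1 / 2) * θ + θ = ((i + 1 : ℕ) + 1 / 2) * θ by push_cast; ring,
        show ((i : ℝ) + 1 / 2) * θ - θ = ((i - 1 : ℕ) + 1 / 2) * θ by
          rw [Nat.cast_sub (by omega)]; push_cast; ring] at h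
      rw [if_neg (by omega), if_pos (by omega)]
      linarith
  · simp [dirichletMode_eq_zero hgt.le, dirichletMode_eq_zero (show p ≤ (i : ℕ) + 1 by omega),
      dirichletMode_eq_zero (show p ≤ (i : ℕ) - 1 by omega)]

end DirichletMode

section Bound

variable {n : ℕ}

lemma pathLap_add_diagonal_mulVec_dirichletMode {p : ℕ} {d : Fin n → ℝ}
    (hd : ∀ i : Fin n, (i : ℕ) < p → d i = 0) (hpn : p < n) (i : Fin n) (hi : (i : ℕ) ≠ p) :
    ((pathLap n + diagonal d) *ᵥ fun j => dirichletMode p j) i = dirEVZ p * dirichletMode p i := by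
  rw [add_mulVec, Pi.add_apply, pathLap_mulVec_dirichletMode hpn i hi, mulVec_diagonal]
  rcases lt_or_ge (i : ℕ) p with h | h
  · rw [hd i h, zero_mul, add_zero]
  · rw [dirichletMode_eq_zero h, mul_zero, mul_zero, add_zero]

lemma pathLap_add_diagonal_mulVec_dirichletMode_rev {q : ℕ} {d : Fin n → ℝ}
    (hd : ∀ i : Fin n, (i.rev : ℕ) < q → d i = 0) (hqn : q < n) (i : Fin n)
    (hi : (i.rev : ℕ) ≠ q) :
    ((pathLap n + diagonal d) *ᵥ fun j => dirichletMode q j.rev) i =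
      dirEVZ q * dirichletMode q i.rev := by
  have hd' : ∀ i : Fin n, (i : ℕ) < q → (d ∘ Fin.rev) i = 0 := fun i hi => hd i.rev (by simpa)
  have := pathLap_add_diagonal_mulVec_dirichletMode hd' hqn i.rev hi
  rw [add_mulVec, Pi.add_apply, mulVec_diagonal] at this ⊢
  rw [← this, Function.comp_apply, Fin.rev_rev]
  congr 1
  exact congrFun (pathLap_mulVec_comp_rev (fun j => dirichletMode q j)) i

theorem lam1_pathLap_add_diagonal_le {d : Fin n → ℝ} {p q : ℕ} (hp : 0 < p) (hq : 0 < q)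
    (hpq : p + q < n) (hdL : ∀ i : Fin n, (i : ℕ) < p → d i = 0)
    (hdR : ∀ i : Fin n, (i.rev : ℕ) < q → d i = 0) :
    lam1 (pathLap n + diagonal d) ≤ max (dirEVZ p) (dirEVZ q) := by
  have : NeZero n := ⟨by omega⟩
  set u : Fin n → ℝ := fun j => dirichletMode p j
  set v : Fin n → ℝ := fun j => dirichletMode q j.rev
  have hHu := pathLap_add_diagonal_mulVec_dirichletMode hdL (by omega)
  have hHv := pathLap_add_diagonal_mulVec_dirichletMode_rev hdR (by omega)
  have hu_supp (i : Fin n) (hi : u i ≠ 0) : (i : ℕ) < p :=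
    lt_of_not_ge fun h => hi (dirichletMode_eq_zero h)
  have hv_supp (i : Fin n) (hi : v i ≠ 0) : (i.rev : ℕ) < q :=
    lt_of_not_ge fun h => hi (dirichletMode_eq_zero h)
  have hsep (i : Fin n) (hi : (i : ℕ) < p) : q < (i.rev : ℕ) := by rw [Fin.val_rev]; omega
  refine lam1_le_of_orthogonal_pair (isHermitian_pathLap.add (isHermitian_diagonal d)) (i₀ := 0)
    (fun f hf => eq_zero_of_pathLap_add_diagonal_mulVec_eq_smul hf) (u := u) (v := v) ?_ ?_ ?_ ?_
    ?_ ?_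
  · exact fun h => (dirichletMode_zero_pos hp).ne' (by simpa [u] using congrFun h 0)
  · exact fun h => (dirichletMode_zero_pos hq).ne' (by
      simpa only [v, Fin.rev_rev, Fin.val_zero, Pi.zero_apply] using congrFun h (Fin.rev 0))
  · exact dotProduct_eq_zero_of_forall_ne_zero fun i hi =>
      dirichletMode_eq_zero (hsep i (hu_supp i hi)).le
  · exact dotProduct_eq_zero_of_forall_ne_zero fun i hi => by
      rw [hHv i (hsep i (hu_supp i hi)).ne', dirichletMode_eq_zero (hsep i (hu_supp i hi)).le,
        mul_zero]
  · rw [dotProduct_mulVec_self_eq_of_forall_ne_zero fun i hi => hHu i (hu_supp i hi).ne]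
    exact mul_le_mul_of_nonneg_right (le_max_left _ _) (dotProduct_self_nonneg u)
  · rw [dotProduct_mulVec_self_eq_of_forall_ne_zero fun i hi => hHv i (hv_supp i hi).ne]
    exact mul_le_mul_of_nonneg_right (le_max_right _ _) (dotProduct_self_nonneg v)

end Bound

theorem stmt9_general (α : ℤ → ℝ) (J : Finset ℤ) (hne : J.Nonempty)
    (hsupp : ∀ j : ℤ, α j ≠ 0 ↔ j ∈ J) :
    ∀ᶠ k : ℕ in atTop,
      lam1 (Hmat k α) ≤
        max (dirEVZ ((k : ℤ) + J.min' hne)) (dirEVZ ((k : ℤ) - J.max' hne)) := by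
  filter_upwards [eventually_ge_atTop ((1 - J.min' hne).toNat + (J.max' hne + 1).toNat)] with k hk
  obtain ⟨p, hp⟩ : ∃ p : ℕ, (p : ℤ) = k + J.min' hne := ⟨_, Int.toNat_of_nonneg (by omega)⟩
  obtain ⟨q, hq⟩ : ∃ q : ℕ, (q : ℤ) = k - J.max' hne := ⟨_, Int.toNat_of_nonneg (by omega)⟩
  have hmin_le_max := J.min'_le _ (J.max'_mem hne)
  rw [← hp, ← hq]
  refine lam1_pathLap_add_diagonal_le (by omega) (by omega) (by omega) (fun i hi => ?_)
    (fun i hi => ?_)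
  · by_contra h
    have := J.min'_le _ ((hsupp _).1 h)
    omega
  · by_contra h
    have := J.le_max' _ ((hsupp _).1 h)
    rw [Fin.val_rev] at hi
    omega

/-- upper bound for the first excited energy: for all sufficiently large `k`,
`λ_1(V_k, α) ≤ max{λ_0(V_{k+r_min}, ∞δ_0), λ_0(V_{k-r_max}, ∞δ_0)}`. -/
theorem stmt9 (α : ℤ → ℝ) (J : Finset ℤ) (hne : J.Nonempty)
    (hsupp : ∀ j : ℤ, α j ≠ 0 ↔ j ∈ J) (hpos : ∀ j ∈ J, 0 < α j) :
    ∀ᶠ k : ℕ in atTop,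
      lam1 (Hmat k α) ≤
        max (dirEVZ ((k : ℤ) + J.min' hne)) (dirEVZ ((k : ℤ) - J.max' hne)) :=
  stmt9_general α J hne hsupp
end

section
/- Quantitative smallness of a_{k,1} + a_{k,2}: there exists a constant c > 0 independent of k such that 0 ≤ a_{k,1} + a_{k,2} ≤ c · (min_j α_j)^{-1} · k^{-1} for all but finitely many k. -/
open Finset Filter Topology Matrix

/-!
Write `ψ j = φ (idx k j)`, `E = λ₀` and `S = ∑ ψ`. Summing the eigenvalue equation from `-k`
to `j` gives the flux identity `ψ j - ψ (j + 1) + ∑_{i ≤ j} α i ψ i = E ∑_{i ≤ j} ψ i`.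
Left of `r_min` the potential vanishes, so there `ψ` decreases with decrements `E ∑_{i ≤ j} ψ i`
that grow in `j`; as `ψ > 0` this forces `E k² ≤ 8`. Symmetrically `ψ` increases right of
`r_max`, and the flux through the whole path gives `α_min ψ r ≤ E S` for `r ∈ J`.

Since the terms at `r_min` and `r_max` vanish and `∑ ψ² = 1`, `a_{k,1} + a_{k,2}` equals
`∑_{r_min ≤ j ≤ r_max} ψ j²` plus the sums of `ψ j² - (ψ j - ψ r)²` over the two outer parts,
`r` being the adjacent endpoint. Monotonicity makes the latter nonnegative, and each is at most `2 ψ r S ≤ 2 E S² / α_min`.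
Between `r_min` and `r_max` the eigenvalue equation lets `ψ` grow at most geometrically, so the
middle sum is `O(ψ r_min²) = O(E S² / α_min²)`. Finally `S² ≤ 2k + 1` by Cauchy–Schwarz, so
`E S² = O(1 / k)`.
-/

theorem Finset.sum_Icc_add_sum_Ioc {α M : Type*} [LinearOrder α] [LocallyFiniteOrder α]
    [AddCommMonoid M] {a b c : α} (hab : a ≤ b) (hbc : b ≤ c) (f : α → M) :
    ∑ i ∈ Icc a b, f i + ∑ i ∈ Ioc b c, f i = ∑ i ∈ Icc a c, f i := by
  rw [← sum_union (disjoint_left.2 fun _ hx hx' => (mem_Ioc.1 hx').1.not_ge (mem_Icc.1 hx).2)]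
  congr 1
  rw [← coe_inj, coe_union, coe_Icc, coe_Ioc, coe_Icc, Set.Icc_union_Ioc_eq_Icc hab hbc]

theorem Finset.sum_Ico_add_sum_Icc {α M : Type*} [LinearOrder α] [LocallyFiniteOrder α]
    [AddCommMonoid M] {a b c : α} (hab : a ≤ b) (hbc : b ≤ c) (f : α → M) :
    ∑ i ∈ Ico a b, f i + ∑ i ∈ Icc b c, f i = ∑ i ∈ Icc a c, f i := by
  rw [← sum_union (disjoint_left.2 fun _ hx hx' => (mem_Ico.1 hx).2.not_ge (mem_Icc.1 hx').1)]
  congr 1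
  rw [← coe_inj, coe_union, coe_Ico, coe_Icc, coe_Icc, Set.Ico_union_Icc_eq_Icc hab hbc]

theorem sum_Ico_sub_succ {M : Type*} [AddCommGroup M] (f : ℤ → M) {m c : ℤ} (h : m ≤ c) :
    ∑ j ∈ Ico m c, (f j - f (j + 1)) = f m - f c := by
  induction c, h using Int.leInduction with
  | base => simp
  | succ c hmc ih =>
    rw [← insert_Ico_right_eq_Ico_add_one_of_not_isMax hmc (not_isMax c), sum_insert (by simp),
      ih]
    abel

theorem Int.cast_card_Icc {R : Type*} [Ring R] {a b : ℤ} (h : a ≤ b + 1) :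
    ((Icc a b).card : R) = b - a + 1 := by
  rw [Int.card_Icc, ← Int.cast_natCast, Int.toNat_of_nonneg (by omega)]
  push_cast
  abel

theorem Int.cast_card_Ico {R : Type*} [Ring R] {a b : ℤ} (h : a ≤ b) :
    ((Ico a b).card : R) = b - a := by
  rw [Int.card_Ico, ← Int.cast_natCast, Int.toNat_of_nonneg (by omega)]
  push_cast
  rfl

section Decrement

variable {f : ℤ → ℝ} {E : ℝ} {a c : ℤ}

theorem antitoneOn_of_sub_succ_eq (hf : ∀ j, 0 ≤ f j) (hE : 0 ≤ E)
    (hd : ∀ j ∈ Ico a c, f j - f (j + 1) = E * ∑ i ∈ Icc a j, f i) :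
    AntitoneOn f (Set.Icc a c) :=
  antitoneOn_of_add_one_le Set.ordConnected_Icc fun j _ hj hj' => by
    have := hd j (mem_Ico.2 ⟨hj.1, by linarith [hj'.2]⟩)
    nlinarith [mul_nonneg hE (sum_nonneg fun i _ => hf i : 0 ≤ ∑ i ∈ Icc a j, f i)]

theorem mul_le_one_of_sub_succ_eq (hf : ∀ j, 0 < f j) (hE : 0 ≤ E)
    (hd : ∀ j ∈ Ico a c, f j - f (j + 1) = E * ∑ i ∈ Icc a j, f i) {m : ℤ} (ham : a ≤ m)
    (hmc : m ≤ c) : E * ((c - m) * (m - a + 1)) ≤ 1 := by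
  set S : ℤ → ℝ := fun j => ∑ i ∈ Icc a j, f i
  have hanti := antitoneOn_of_sub_succ_eq (fun j => (hf j).le) hE hd
  have hS_mono : Monotone S := fun i j hij =>
    sum_le_sum_of_subset_of_nonneg (Icc_subset_Icc_right hij) fun i _ _ => (hf i).le
  have hSm : ((m : ℝ) - a + 1) * f m ≤ S m := by
    have := card_nsmul_le_sum (Icc a m) f (f m) fun i hi =>
      hanti (by simp only [mem_Icc, Set.mem_Icc] at hi ⊢; omega)
        (by simp only [Set.mem_Icc]; omega) (mem_Icc.1 hi).2
    rwa [nsmul_eq_mul, Int.cast_card_Icc (by omega)] at this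
  -- the decrements `E * S j` grow with `j`, while their sum from `m` to `c` is below `f m`
  have hdrop : ((c : ℝ) - m) * (E * S m) ≤ f m - f c := by
    rw [← sum_Ico_sub_succ f hmc, sum_congr rfl fun j hj => hd j (Ico_subset_Ico ham le_rfl hj)]
    have := card_nsmul_le_sum (Ico m c) _ (E * S m) fun j hj =>
      mul_le_mul_of_nonneg_left (hS_mono (mem_Ico.1 hj).1) hE
    rwa [nsmul_eq_mul, Int.cast_card_Ico hmc] at this
  have hcm : (0 : ℝ) ≤ c - m := by rw [sub_nonneg]; exact_mod_cast hmc
  have key : E * ((c - m) * (m - a + 1)) * f m ≤ 1 * f m := by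
    nlinarith [mul_le_mul_of_nonneg_left hSm (mul_nonneg hcm hE), hf c]
  exact le_of_mul_le_mul_right key (hf m)

end Decrement

/-- `a_{k,1} + a_{k,2}` for `a = -k`, `b = k`, `r = r_min`, `s = r_max`. -/
noncomputable def edgeDefect (ψ : ℤ → ℝ) (a r s b : ℤ) : ℝ :=
  (1 / 2 - ∑ j ∈ Icc a r, (ψ j - ψ r) ^ 2) + (1 / 2 - ∑ j ∈ Icc s b, (ψ j - ψ s) ^ 2)

section EdgeDefect

variable {ψ : ℤ → ℝ} {a r s b : ℤ}

theorem edgeDefect_eq (har : a ≤ r) (hrs : r ≤ s) (hsb : s ≤ b)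
    (hnorm : ∑ j ∈ Icc a b, ψ j ^ 2 = 1) :
    edgeDefect ψ a r s b = ∑ j ∈ Icc r s, ψ j ^ 2 + ∑ j ∈ Ico a r, (ψ j ^ 2 - (ψ j - ψ r) ^ 2)
      + ∑ j ∈ Ioc s b, (ψ j ^ 2 - (ψ j - ψ s) ^ 2) := by
  rw [← sum_Ico_add_sum_Icc har (hrs.trans hsb), ← sum_Icc_add_sum_Ioc hrs hsb] at hnorm
  rw [edgeDefect, ← Ico_insert_right har, ← Ioc_insert_left hsb, sum_insert (by simp),
    sum_insert (by simp), sum_sub_distrib, sum_sub_distrib]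
  linarith [sub_self (ψ r), sub_self (ψ s)]

theorem edgeDefect_nonneg (har : a ≤ r) (hrs : r ≤ s) (hsb : s ≤ b) (hψ : ∀ j, 0 ≤ ψ j)
    (hnorm : ∑ j ∈ Icc a b, ψ j ^ 2 = 1) (hanti : AntitoneOn ψ (Set.Icc a r))
    (hmono : MonotoneOn ψ (Set.Icc s b)) : 0 ≤ edgeDefect ψ a r s b := by
  rw [edgeDefect_eq har hrs hsb hnorm]
  have hleft : ∀ j ∈ Ico a r, 0 ≤ ψ j ^ 2 - (ψ j - ψ r) ^ 2 := fun j hj => by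
    rw [mem_Ico] at hj
    have := hanti ⟨hj.1, hj.2.le⟩ ⟨har, le_rfl⟩ hj.2.le
    nlinarith [hψ r]
  have hright : ∀ j ∈ Ioc s b, 0 ≤ ψ j ^ 2 - (ψ j - ψ s) ^ 2 := fun j hj => by
    rw [mem_Ioc] at hj
    have := hmono ⟨le_rfl, hsb⟩ ⟨hj.1.le, hj.2⟩ hj.1.le
    nlinarith [hψ s]
  have := sum_nonneg hleft
  have := sum_nonneg hright
  positivity

theorem edgeDefect_le (har : a ≤ r) (hrs : r ≤ s) (hsb : s ≤ b) (hψ : ∀ j, 0 ≤ ψ j)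
    (hnorm : ∑ j ∈ Icc a b, ψ j ^ 2 = 1) :
    edgeDefect ψ a r s b ≤ ∑ j ∈ Icc r s, ψ j ^ 2 + 2 * (ψ r + ψ s) * ∑ j ∈ Icc a b, ψ j := by
  rw [edgeDefect_eq har hrs hsb hnorm]
  have hleft : ∑ j ∈ Ico a r, (ψ j ^ 2 - (ψ j - ψ r) ^ 2) ≤ 2 * ψ r * ∑ j ∈ Icc a b, ψ j := by
    rw [mul_sum]
    refine (sum_le_sum fun j _ => ?_).trans (sum_le_sum_of_subset_of_nonneg
      (Ico_subset_Icc_self.trans (Icc_subset_Icc_right (hrs.trans hsb))) fun j _ _ => ?_)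
    · nlinarith [sq_nonneg (ψ r)]
    · exact mul_nonneg (mul_nonneg zero_le_two (hψ r)) (hψ j)
  have hright : ∑ j ∈ Ioc s b, (ψ j ^ 2 - (ψ j - ψ s) ^ 2) ≤ 2 * ψ s * ∑ j ∈ Icc a b, ψ j := by
    rw [mul_sum]
    refine (sum_le_sum fun j _ => ?_).trans (sum_le_sum_of_subset_of_nonneg
      (Ioc_subset_Icc_self.trans (Icc_subset_Icc_left (har.trans hrs))) fun j _ _ => ?_)
    · nlinarith [sq_nonneg (ψ s)]
    · exact mul_nonneg (mul_nonneg zero_le_two (hψ s)) (hψ j)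
  linarith

end EdgeDefect

/-- `(L + V) ψ = E ψ` on the path `{a, …, b}`, with `L` its Neumann Laplacian. -/
structure IsPathEigen (a b : ℤ) (V : ℤ → ℝ) (E : ℝ) (ψ : ℤ → ℝ) : Prop where
  left : ψ a - ψ (a + 1) + V a * ψ a = E * ψ a
  interior : ∀ j, a < j → j < b → 2 * ψ j - ψ (j - 1) - ψ (j + 1) + V j * ψ j = E * ψ j
  right : ψ b - ψ (b - 1) + V b * ψ b = E * ψ b

namespace IsPathEigen

variable {a b : ℤ} {V : ℤ → ℝ} {E : ℝ} {ψ : ℤ → ℝ}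

theorem flux (h : IsPathEigen a b V E ψ) {j : ℤ} (haj : a ≤ j) (hjb : j < b) :
    ψ j - ψ (j + 1) + ∑ i ∈ Icc a j, V i * ψ i = E * ∑ i ∈ Icc a j, ψ i := by
  induction j, haj using Int.leInduction with
  | base =>
    simp only [Icc_self, sum_singleton]
    linarith [h.left]
  | succ j haj ih =>
    rw [← insert_Icc_right_eq_Icc_add_one (by omega), sum_insert (by simp),
      sum_insert (by simp)]
    have := h.interior (j + 1) (by omega) hjb
    rw [add_sub_cancel_right] at this
    linarith [ih (by omega)]

theorem sum_pot_mul (h : IsPathEigen a b V E ψ) (hab : a < b) :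
    ∑ i ∈ Icc a b, V i * ψ i = E * ∑ i ∈ Icc a b, ψ i := by
  have := h.flux (j := b - 1) (by omega) (by omega)
  rw [sub_add_cancel] at this
  rw [← sub_add_cancel b 1, ← insert_Icc_right_eq_Icc_add_one (by omega), sum_insert (by simp),
    sum_insert (by simp), sub_add_cancel]
  linarith [h.right]

theorem pot_mul_le (h : IsPathEigen a b V E ψ) (hab : a < b) (hψ : ∀ j, 0 ≤ ψ j)
    (hV : ∀ j, 0 ≤ V j) {r : ℤ} (hr : r ∈ Icc a b) :
    V r * ψ r ≤ E * ∑ i ∈ Icc a b, ψ i :=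
  h.sum_pot_mul hab ▸ single_le_sum (fun i _ => mul_nonneg (hV i) (hψ i)) hr

theorem le_energy_mul_sum_div (h : IsPathEigen a b V E ψ) (hab : a < b) (hψ : ∀ j, 0 ≤ ψ j)
    (hV : ∀ j, 0 ≤ V j) {r : ℤ} (hr : r ∈ Icc a b) {A : ℝ} (hA : 0 < A) (hAr : A ≤ V r) :
    ψ r ≤ E * (∑ i ∈ Icc a b, ψ i) / A := by
  rw [le_div_iff₀ hA]
  nlinarith [h.pot_mul_le hab hψ hV hr, hψ r]

theorem energy_pos (h : IsPathEigen a b V E ψ) (hab : a < b) (hψ : ∀ j, 0 < ψ j)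
    (hV : ∀ j, 0 ≤ V j) {r : ℤ} (hr : r ∈ Icc a b) (hVr : 0 < V r) : 0 < E :=
  (pos_iff_pos_of_mul_pos ((mul_pos hVr (hψ r)).trans_le
    (h.pot_mul_le hab (fun j => (hψ j).le) hV hr))).2 (sum_pos (fun i _ => hψ i) ⟨r, hr⟩)

theorem sub_succ_eq_of_eq_zero (h : IsPathEigen a b V E ψ) {c : ℤ} (hcb : c ≤ b)
    (hV : ∀ j ∈ Ico a c, V j = 0) :
    ∀ j ∈ Ico a c, ψ j - ψ (j + 1) = E * ∑ i ∈ Icc a j, ψ i := fun j hj => by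
  rw [mem_Ico] at hj
  have := h.flux hj.1 (by omega)
  rwa [sum_eq_zero fun i hi => by rw [hV i (by simp only [mem_Icc, mem_Ico] at hi ⊢; omega),
    zero_mul], add_zero] at this

theorem monotoneOn_of_eq_zero (h : IsPathEigen a b V E ψ) (hψ : ∀ j, 0 ≤ ψ j) (hE : 0 ≤ E)
    {c : ℤ} (hac : a ≤ c) (hV : ∀ j ∈ Ioc c b, V j = 0) : MonotoneOn ψ (Set.Icc c b) :=
  monotoneOn_of_le_add_one Set.ordConnected_Icc fun j _ hj hj' => by
    simp only [Set.mem_Icc] at hj hj'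
    have hflux := h.flux (j := j) (by omega) (by omega)
    have htotal := h.sum_pot_mul (by omega)
    have hfree : ∑ i ∈ Ioc j b, V i * ψ i = 0 := sum_eq_zero fun i hi => by
      rw [hV i (by simp only [mem_Ioc] at hi ⊢; omega), zero_mul]
    rw [← sum_Icc_add_sum_Ioc (b := j) (by omega) (by omega) (fun i => V i * ψ i),
      ← sum_Icc_add_sum_Ioc (b := j) (by omega) (by omega) ψ, hfree, add_zero] at htotal
    nlinarith [mul_nonneg hE (sum_nonneg fun i _ => hψ i : 0 ≤ ∑ i ∈ Ioc j b, ψ i)]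

theorem le_pow_mul (h : IsPathEigen a b V E ψ) (hψ : ∀ j, 0 < ψ j) (hE : 0 ≤ E) {G : ℝ}
    (hG : ∀ j, 2 + V j ≤ G) {r : ℤ} (har : a < r) :
    ∀ n : ℕ, r + n ≤ b → ψ (r + n) ≤ G ^ n * ψ r
  | 0, _ => by simp
  | n + 1, hn => by
    have hstep : ψ (r + n + 1) ≤ G * ψ (r + n) := by
      have := h.interior (r + n) (by omega) (by omega)
      nlinarith [hG (r + n), hψ (r + n), hψ (r + n - 1), mul_nonneg hE (hψ (r + n)).le]
    have hG0 : 0 < G := pos_of_mul_pos_left ((hψ _).trans_le hstep) (hψ _).le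
    calc ψ (r + ↑(n + 1)) = ψ (r + n + 1) := by push_cast; ring_nf
      _ ≤ G * (G ^ n * ψ r) := hstep.trans (mul_le_mul_of_nonneg_left
          (le_pow_mul h hψ hE hG har n (by omega)) hG0.le)
      _ = G ^ (n + 1) * ψ r := by ring

theorem sum_sq_Icc_le (h : IsPathEigen a b V E ψ) (hψ : ∀ j, 0 < ψ j) (hE : 0 ≤ E)
    (hV : ∀ j, 0 ≤ V j) {G : ℝ} (hG : ∀ j, 2 + V j ≤ G) {r s : ℤ} (har : a < r) (hrs : r ≤ s)
    (hsb : s ≤ b) :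
    ∑ j ∈ Icc r s, ψ j ^ 2 ≤ (s - r + 1) * G ^ (2 * (s - r).toNat) * ψ r ^ 2 := by
  have hgrowth : ∀ j ∈ Icc r s, ψ j ≤ G ^ (s - r).toNat * ψ r := fun j hj => by
    rw [mem_Icc] at hj
    obtain ⟨n, rfl⟩ : ∃ n : ℕ, j = r + n := ⟨(j - r).toNat, by omega⟩
    exact (h.le_pow_mul hψ hE hG har n (by omega)).trans (mul_le_mul_of_nonneg_right
      (pow_le_pow_right₀ (by linarith [hG 0, hV 0]) (by omega)) (hψ r).le)
  have := sum_le_card_nsmul (Icc r s) (fun j => ψ j ^ 2) ((G ^ (s - r).toNat * ψ r) ^ 2)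
    fun j hj => pow_le_pow_left₀ (hψ j).le (hgrowth j hj) 2
  rw [nsmul_eq_mul, Int.cast_card_Icc (by omega)] at this
  linarith [show ((s : ℝ) - r + 1) * (G ^ (s - r).toNat * ψ r) ^ 2
    = (s - r + 1) * G ^ (2 * (s - r).toNat) * ψ r ^ 2 by ring]

theorem edgeDefect_nonneg (h : IsPathEigen a b V E ψ) (hψ : ∀ j, 0 < ψ j)
    (hnorm : ∑ j ∈ Icc a b, ψ j ^ 2 = 1) (hV : ∀ j, 0 ≤ V j) {r s : ℤ} (har : a ≤ r)
    (hrs : r ≤ s) (hsb : s ≤ b) (hab : a < b) (hVr : 0 < V r)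
    (hVout : ∀ j, j < r ∨ s < j → V j = 0) : 0 ≤ edgeDefect ψ a r s b := by
  have hψ0 : ∀ j, 0 ≤ ψ j := fun j => (hψ j).le
  have hE := h.energy_pos hab hψ hV (mem_Icc.2 ⟨har, hrs.trans hsb⟩) hVr
  exact _root_.edgeDefect_nonneg har hrs hsb hψ0 hnorm
    (antitoneOn_of_sub_succ_eq hψ0 hE.le (h.sub_succ_eq_of_eq_zero (hrs.trans hsb)
      fun j hj => hVout j (.inl (mem_Ico.1 hj).2)))
    (h.monotoneOn_of_eq_zero hψ0 hE.le (har.trans hrs) fun j hj => hVout j (.inr (mem_Ioc.1 hj).1))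

end IsPathEigen

theorem idx_val_cast {k : ℕ} {j : ℤ} (hj : j ∈ Icc (-(k : ℤ)) k) :
    ((idx k j : ℕ) : ℤ) = j + k := by
  rw [mem_Icc] at hj
  have : (j + k).toNat < 2 * k + 1 := by omega
  simp only [idx, Nat.mod_eq_of_lt this]
  omega

theorem sum_idx (k : ℕ) (g : Fin (2 * k + 1) → ℝ) :
    ∑ j ∈ Icc (-(k : ℤ)) k, g (idx k j) = ∑ i, g i := by
  refine sum_nbij' (idx k) (fun i => (i : ℤ) - k) (fun _ _ => mem_univ _) (fun i _ => ?_)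
    (fun j hj => ?_) (fun i _ => ?_) (fun _ _ => rfl)
  · simp only [mem_Icc]
    omega
  · rw [idx_val_cast hj]
    ring
  · have hi : (i : ℤ) - k ∈ Icc (-(k : ℤ)) k := by rw [mem_Icc]; omega
    ext
    have := idx_val_cast hi
    omega

theorem Hmat_idx_idx {k : ℕ} (α : ℤ → ℝ) {i j : ℤ} (hi : i ∈ Icc (-(k : ℤ)) k)
    (hj : j ∈ Icc (-(k : ℤ)) k) :
    Hmat k α (idx k i) (idx k j) =
      (if j = i then (if i = -k ∨ i = k then 1 else 2) + α i else 0)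
        - (if j = i + 1 then 1 else 0) - (if j = i - 1 then 1 else 0) := by
  have hvi := idx_val_cast hi
  have hvj := idx_val_cast hj
  have hfin : idx k i = idx k j ↔ j = i := by rw [Fin.ext_iff]; omega
  have hfirst : (idx k i : ℕ) = 0 ↔ i = -k := by omega
  have hlast : (idx k i : ℕ) = 2 * k + 1 - 1 ↔ i = k := by omega
  have hsucc : (idx k i : ℕ) + 1 = idx k j ↔ j = i + 1 := by omega
  have hpred : (idx k j : ℕ) + 1 = idx k i ↔ j = i - 1 := by omega
  have hsite : ((idx k i : ℕ) : ℤ) - k = i := by omega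
  simp only [Hmat, pathLap, potMat, Matrix.add_apply, of_apply, diagonal_apply, hfin, hfirst,
    hlast, hsucc, hpred, hsite]
  split_ifs <;> first | omega | ring

theorem Hmat_mulVec_idx {k : ℕ} (α : ℤ → ℝ) (φ : Fin (2 * k + 1) → ℝ) {i : ℤ}
    (hi : i ∈ Icc (-(k : ℤ)) k) :
    (Hmat k α *ᵥ φ) (idx k i) =
      ((if i = -k ∨ i = k then 1 else 2) + α i) * φ (idx k i)
        - (if i + 1 ∈ Icc (-(k : ℤ)) k then φ (idx k (i + 1)) else 0)
        - (if i - 1 ∈ Icc (-(k : ℤ)) k then φ (idx k (i - 1)) else 0) := by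
  rw [mulVec, dotProduct, ← sum_idx, sum_congr rfl fun j hj => by rw [Hmat_idx_idx α hi hj]]
  simp only [sub_mul, ite_mul, one_mul, zero_mul, sum_sub_distrib, sum_ite_eq', if_pos hi]

theorem isPathEigen_of_mulVec_eq {k : ℕ} (hk : 0 < k) {α : ℤ → ℝ} {φ : Fin (2 * k + 1) → ℝ}
    {E : ℝ} (h : Hmat k α *ᵥ φ = E • φ) : IsPathEigen (-k) k α E (fun j => φ (idx k j)) := by
  have row : ∀ i ∈ Icc (-(k : ℤ)) k, (Hmat k α *ᵥ φ) (idx k i) = E * φ (idx k i) := fun i _ => by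
    rw [h, Pi.smul_apply, smul_eq_mul]
  refine ⟨?_, fun j hj hj' => ?_, ?_⟩
  · have := row (-k) (by simp)
    rw [Hmat_mulVec_idx α φ (by simp)] at this
    simp only [mem_Icc, true_or, if_true] at this
    rw [if_pos (by omega), if_neg (by omega)] at this
    linarith
  · have hj : j ∈ Icc (-(k : ℤ)) k := by rw [mem_Icc]; omega
    have := row j hj
    rw [Hmat_mulVec_idx α φ hj, if_neg (by omega), if_pos (by rw [mem_Icc]; omega),
      if_pos (by rw [mem_Icc]; omega)] at this
    linarith
  · have := row k (by simp)
    rw [Hmat_mulVec_idx α φ (by simp)] at this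
    simp only [mem_Icc, or_true, if_true] at this
    rw [if_neg (by omega), if_pos (by omega)] at this
    linarith

namespace IsPathEigen

variable {k : ℕ} {V : ℤ → ℝ} {E : ℝ} {ψ : ℤ → ℝ}

theorem energy_mul_sq_le (h : IsPathEigen (-k) k V E ψ) (hψ : ∀ j, 0 < ψ j) (hE : 0 ≤ E)
    {r : ℤ} (hV : ∀ j ∈ Ico (-(k : ℤ)) r, V j = 0) (hk : 4 * r.natAbs + 4 ≤ k) :
    E * k ^ 2 ≤ 8 := by
  set m : ℤ := -((k / 2 : ℕ) : ℤ)
  have hm := mul_le_one_of_sub_succ_eq hψ hE (h.sub_succ_eq_of_eq_zero (by omega) hV)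
    (m := m) (by omega) (by omega)
  have h1 : (k : ℝ) ≤ 4 * ((r : ℝ) - m) := by exact_mod_cast (by omega : (k : ℤ) ≤ 4 * (r - m))
  have h2 : (k : ℝ) ≤ 2 * ((m : ℝ) + k + 1) := by
    exact_mod_cast (by omega : (k : ℤ) ≤ 2 * (m + k + 1))
  push_cast at hm
  nlinarith [mul_le_mul h1 h2 (Nat.cast_nonneg k) (by linarith)]

theorem energy_mul_sq_sum_le (h : IsPathEigen (-k) k V E ψ) (hψ : ∀ j, 0 < ψ j)
    (hnorm : ∑ j ∈ Icc (-(k : ℤ)) k, ψ j ^ 2 = 1) (hE : 0 ≤ E) {r : ℤ}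
    (hV : ∀ j ∈ Ico (-(k : ℤ)) r, V j = 0) (hk : 4 * r.natAbs + 4 ≤ k) :
    E * (∑ j ∈ Icc (-(k : ℤ)) k, ψ j) ^ 2 ≤ 24 / k := by
  have hcs := sq_sum_le_card_mul_sum_sq (s := Icc (-(k : ℤ)) k) (f := ψ)
  rw [hnorm, Int.cast_card_Icc (by omega)] at hcs
  push_cast at hcs
  have hk4 : (4 : ℝ) ≤ k := by exact_mod_cast (by omega : 4 ≤ k)
  rw [le_div_iff₀ (by positivity)]
  nlinarith [h.energy_mul_sq_le hψ hE hV hk, mul_le_mul_of_nonneg_left hcs hE]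

theorem edgeDefect_le (h : IsPathEigen (-k) k V E ψ) (hψ : ∀ j, 0 < ψ j)
    (hnorm : ∑ j ∈ Icc (-(k : ℤ)) k, ψ j ^ 2 = 1) (hV : ∀ j, 0 ≤ V j) {r s : ℤ} (hrs : r ≤ s)
    (hVout : ∀ j, j < r ∨ s < j → V j = 0) {A G : ℝ} (hA : 0 < A) (hAr : A ≤ V r)
    (hAs : A ≤ V s) (hG : ∀ j, 2 + V j ≤ G) (hk : 4 * (r.natAbs + s.natAbs) + 4 ≤ k) :
    edgeDefect ψ (-k) r s k ≤
      24 * ((s - r + 1) * G ^ (2 * (s - r).toNat) / A + 4) * A⁻¹ * (k : ℝ)⁻¹ := by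
  have hr : r ∈ Icc (-(k : ℤ)) k := by rw [mem_Icc]; omega
  have hs : s ∈ Icc (-(k : ℤ)) k := by rw [mem_Icc]; omega
  have hψ0 : ∀ j, 0 ≤ ψ j := fun j => (hψ j).le
  have hE := h.energy_pos (by omega) hψ hV hr (hA.trans_le hAr)
  have hVleft : ∀ j ∈ Ico (-(k : ℤ)) r, V j = 0 := fun j hj => hVout j (.inl (mem_Ico.1 hj).2)
  set S := ∑ j ∈ Icc (-(k : ℤ)) k, ψ j
  set K := ((s : ℝ) - r + 1) * G ^ (2 * (s - r).toNat)
  have hS : 0 ≤ S := sum_nonneg fun j _ => hψ0 j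
  have hES := h.energy_mul_sq_sum_le hψ hnorm hE.le hVleft (by omega)
  have hE1 : E ≤ 1 := by
    have hk4 : (4 : ℝ) ≤ k := by exact_mod_cast (by omega : 4 ≤ k)
    nlinarith [h.energy_mul_sq_le hψ hE.le hVleft (by omega)]
  have hψr : ψ r ≤ E * S / A := h.le_energy_mul_sum_div (by omega) hψ0 hV hr hA hAr
  have hψs : ψ s ≤ E * S / A := h.le_energy_mul_sum_div (by omega) hψ0 hV hs hA hAs
  have hψr2 : ψ r ^ 2 ≤ E * S ^ 2 / A ^ 2 := calc
    ψ r ^ 2 ≤ (E * S / A) ^ 2 := pow_le_pow_left₀ (hψ0 r) hψr 2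
    _ = E * (E * S ^ 2) / A ^ 2 := by ring
    _ ≤ E * S ^ 2 / A ^ 2 := by gcongr; nlinarith [sq_nonneg S]
  have hK : 0 ≤ K := mul_nonneg (by exact_mod_cast (by omega : (0 : ℤ) ≤ s - r + 1))
    (pow_nonneg (by linarith [hG 0, hV 0]) _)
  calc edgeDefect ψ (-k) r s k ≤ ∑ j ∈ Icc r s, ψ j ^ 2 + 2 * (ψ r + ψ s) * S :=
        _root_.edgeDefect_le (by omega) hrs (by omega) hψ0 hnorm
    _ ≤ K * (E * S ^ 2 / A ^ 2) + 2 * (E * S / A + E * S / A) * S := by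
        gcongr
        exact (h.sum_sq_Icc_le hψ hE.le hV hG (by omega) hrs (by omega)).trans (by gcongr)
    _ = (K / A + 4) * (E * S ^ 2) * A⁻¹ := by
        field_simp
        ring
    _ ≤ (K / A + 4) * (24 / k) * A⁻¹ := by gcongr
    _ = 24 * (K / A + 4) * A⁻¹ * (k : ℝ)⁻¹ := by ring

end IsPathEigen

section Support

variable {α : ℤ → ℝ} {J : Finset ℤ}

theorem nonneg_of_support (hsupp : ∀ j, α j ≠ 0 ↔ j ∈ J) (hpos : ∀ j ∈ J, 0 < α j) (j : ℤ) :
    0 ≤ α j := by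
  by_cases hj : α j = 0
  · exact hj.ge
  · exact (hpos j ((hsupp j).1 hj)).le

theorem eq_zero_of_lt_min'_or_max'_lt (hsupp : ∀ j, α j ≠ 0 ↔ j ∈ J) (hne : J.Nonempty)
    {j : ℤ} (hj : j < J.min' hne ∨ J.max' hne < j) : α j = 0 := by
  by_contra hj0
  have hjJ := (hsupp j).1 hj0
  have := J.min'_le j hjJ
  have := J.le_max' j hjJ
  omega

theorem le_sup'_of_support (hsupp : ∀ j, α j ≠ 0 ↔ j ∈ J) (hne : J.Nonempty)
    (hpos : ∀ j ∈ J, 0 < α j) (j : ℤ) : α j ≤ J.sup' hne α := by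
  by_cases hj : α j = 0
  · exact hj ▸ (hpos _ (J.min'_mem hne)).le.trans (J.le_sup' α (J.min'_mem hne))
  · exact J.le_sup' α ((hsupp j).1 hj)

end Support

/-- quantitative smallness of `a_{k,1} + a_{k,2}`: there is `c > 0`
independent of `k` such that `0 ≤ a_{k,1} + a_{k,2} ≤ c (min_j α_j)⁻¹ k⁻¹` for all but
finitely many `k`. -/
theorem stmt13 (α : ℤ → ℝ) (J : Finset ℤ) (hne : J.Nonempty)
    (hsupp : ∀ j : ℤ, α j ≠ 0 ↔ j ∈ J) (hpos : ∀ j ∈ J, 0 < α j)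
    (rmin rmax : ℤ) (hrmin : rmin = J.min' hne) (hrmax : rmax = J.max' hne) :
    ∃ c : ℝ, 0 < c ∧ ∀ᶠ k : ℕ in atTop, ∀ φ : Fin (2*k+1) → ℝ, isGS k α φ →
      0 ≤ (1/2 - ∑ j ∈ Finset.Icc (-(k : ℤ)) rmin, (φ (idx k j) - φ (idx k rmin)) ^ 2) +
          (1/2 - ∑ j ∈ Finset.Icc rmax (k : ℤ), (φ (idx k j) - φ (idx k rmax)) ^ 2) ∧
      (1/2 - ∑ j ∈ Finset.Icc (-(k : ℤ)) rmin, (φ (idx k j) - φ (idx k rmin)) ^ 2) +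
          (1/2 - ∑ j ∈ Finset.Icc rmax (k : ℤ), (φ (idx k j) - φ (idx k rmax)) ^ 2) ≤
        c * (J.inf' hne α)⁻¹ * (k : ℝ)⁻¹ := by
  have hrmin_mem : rmin ∈ J := hrmin ▸ J.min'_mem hne
  have hrmax_mem : rmax ∈ J := hrmax ▸ J.max'_mem hne
  have hrr : rmin ≤ rmax := hrmin ▸ hrmax ▸ J.min'_le _ (J.max'_mem hne)
  have hαout (j : ℤ) (hj : j < rmin ∨ rmax < j) : α j = 0 :=
    eq_zero_of_lt_min'_or_max'_lt hsupp hne (hrmin ▸ hrmax ▸ hj)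
  have hα := nonneg_of_support hsupp hpos
  have hA : 0 < J.inf' hne α := (lt_inf'_iff hne).2 hpos
  have hG (j : ℤ) : 2 + α j ≤ 2 + J.sup' hne α := by
    linarith [le_sup'_of_support hsupp hne hpos j]
  set K : ℝ := (rmax - rmin + 1) * (2 + J.sup' hne α) ^ (2 * (rmax - rmin).toNat)
  have hK : 0 ≤ K := mul_nonneg (by exact_mod_cast (by omega : (0 : ℤ) ≤ rmax - rmin + 1))
    (pow_nonneg (by linarith [hG rmin, hα rmin]) _)
  refine ⟨24 * (K / J.inf' hne α + 4), by positivity, ?_⟩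
  filter_upwards [eventually_ge_atTop (4 * (rmin.natAbs + rmax.natAbs) + 4)] with k hk φ hφ
  have h := isPathEigen_of_mulVec_eq (by omega) hφ.1
  have hψ : ∀ j, 0 < φ (idx k j) := fun _ => hφ.2.2 _
  have hnorm := (sum_idx k _).trans hφ.2.1
  exact ⟨h.edgeDefect_nonneg hψ hnorm hα (by omega) hrr (by omega) (by omega)
      (hpos rmin hrmin_mem) hαout,
    h.edgeDefect_le hψ hnorm hα hrr hαout hA (J.inf'_le α hrmin_mem) (J.inf'_le α hrmax_mem)
      hG hk⟩
end

section
/- Lower bound on the mixing coefficient: there is a constant c > 0 independent of k and α such that b_k ≥ c (Σ_{j∈J} α_j)^{-1} k^{-1} for all but finitely many k, where b_k is the normalization coefficient of the trial state in the upper bound for λ_0(V_k, α). -/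
open Finset Filter Topology Matrix

/-! Write `u = c_L + c_R` and `T = ∑ u`. The profiles overlap at most at `r_min = r_max`, where
`c_L` vanishes, so `∑ u² = 1` and the normalisation of the trial state becomes the mixing
equation `b = 2 √(1-b) β T + (2k+1) β²` with `β² = b λ / ((2+ε) S)`, `λ = λ_0(V_k, ∞δ_0)`,
`S = ∑ α_j`. If `b ≤ 1/2`, squaring the cross term gives `b ≥ 2 λ T² / ((2+ε) S)`; here
`λ ≥ 4/(2k+1)²` by Jordan's inequality, and `T² ≳ k` because `c_L ≥ ‖c_L‖_∞ / 2` on the first `k/4`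
sites, while `∑ c_L² ≤ ‖c_L‖_∞ ∑ c_L`. If `b > 1/2`, the quadratic term alone gives
`(2k+1) λ ≤ (2+ε) S`, which makes `c / (S k)` smaller than `1/2`. -/

lemma sum_fin_eq_sum_Icc {M : Type*} [AddCommMonoid M] (k : ℕ) (F : ℤ → M) :
    ∑ i : Fin (2 * k + 1), F ((i : ℤ) - k) = ∑ j ∈ Icc (-(k : ℤ)) k, F j := by
  refine sum_nbij' (fun i => (i : ℤ) - k) (idx k) ?_ (by simp) ?_ ?_ (by simp)
  · rintro ⟨i, hi⟩ -
    simp only [mem_Icc]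
    omega
  · rintro ⟨i, hi⟩ -
    ext
    simp [idx, Nat.mod_eq_of_lt hi]
  · intro j hj
    simp only [mem_Icc] at hj
    have hlt : (j + k).toNat < 2 * k + 1 := by omega
    simp only [idx, Nat.mod_eq_of_lt hlt]
    omega

lemma sum_sq_mul_add_const {ι : Type*} (s : Finset ι) (u : ι → ℝ) (a β : ℝ) :
    ∑ i ∈ s, (a * u i + β) ^ 2
      = a ^ 2 * ∑ i ∈ s, u i ^ 2 + 2 * a * β * ∑ i ∈ s, u i + #s * β ^ 2 := by
  simp only [add_sq, mul_pow, sum_add_distrib, mul_sum, sum_const, nsmul_eq_mul]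
  congr 1; congr 1
  exact sum_congr rfl fun i _ => by ring

lemma sum_add_sq_of_mul_eq_zero {ι : Type*} (s : Finset ι) (f g : ι → ℝ)
    (h : ∀ i ∈ s, f i * g i = 0) :
    ∑ i ∈ s, (f i + g i) ^ 2 = ∑ i ∈ s, f i ^ 2 + ∑ i ∈ s, g i ^ 2 := by
  rw [← sum_add_distrib]
  exact sum_congr rfl fun i hi => by linear_combination 2 * h i hi

lemma mixing_equation {ι : Type*} (s : Finset ι) (u : ι → ℝ) {b β : ℝ} (hb : b ≤ 1)
    (hu : ∑ i ∈ s, u i ^ 2 = 1) (h : ∑ i ∈ s, (Real.sqrt (1 - b) * u i + β) ^ 2 = 1) :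
    b = 2 * Real.sqrt (1 - b) * β * ∑ i ∈ s, u i + #s * β ^ 2 := by
  rw [sum_sq_mul_add_const, hu, Real.sq_sqrt (by linarith)] at h
  linarith

lemma mixing_bounds {b q T K β : ℝ} (hb : 0 < b) (hT : 0 ≤ T) (hK : 0 ≤ K) (hβ0 : 0 ≤ β)
    (hβ : β ^ 2 = b * q) (h : b = 2 * Real.sqrt (1 - b) * β * T + K * β ^ 2) :
    min (1/2) (2 * q * T ^ 2) ≤ b ∧ K * q ≤ 1 := by
  have hcross : 0 ≤ 2 * Real.sqrt (1 - b) * β * T := by positivity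
  have hq : 0 ≤ q := nonneg_of_mul_nonneg_right (hβ ▸ sq_nonneg β) hb
  refine ⟨?_, ?_⟩
  · rcases le_or_gt b (1/2) with hb2 | hb2
    · refine min_le_of_right_le ?_
      have hsq : (2 * Real.sqrt (1 - b) * β * T) ^ 2 ≤ b ^ 2 := by
        gcongr; linarith [mul_nonneg hK (sq_nonneg β)]
      rw [mul_pow, mul_pow, mul_pow, Real.sq_sqrt (by linarith), hβ] at hsq
      have h4 : 4 * (1 - b) * (q * T ^ 2) ≤ b :=
        le_of_mul_le_mul_left (by linarith) hb
      nlinarith [mul_nonneg hq (sq_nonneg T)]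
    · exact min_le_of_left_le hb2.le
  · nlinarith

lemma mul_card_mul_sum_sq_le_sq_sum {ι : Type*} {s t : Finset ι} (hts : t ⊆ s) {u : ι → ℝ}
    {c δ : ℝ} (hδ : 0 ≤ δ) (h0 : ∀ i ∈ s, 0 ≤ u i) (hle : ∀ i ∈ s, u i ≤ c)
    (hge : ∀ i ∈ t, δ * c ≤ u i) :
    δ * #t * ∑ i ∈ s, u i ^ 2 ≤ (∑ i ∈ s, u i) ^ 2 := by
  have hsq : ∑ i ∈ s, u i ^ 2 ≤ c * ∑ i ∈ s, u i := by
    rw [mul_sum]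
    exact sum_le_sum fun i hi => by nlinarith [h0 i hi, hle i hi]
  have hmass : δ * #t * c ≤ ∑ i ∈ s, u i := calc
    δ * #t * c = ∑ i ∈ t, δ * c := by rw [sum_const, nsmul_eq_mul]; ring
    _ ≤ ∑ i ∈ t, u i := sum_le_sum hge
    _ ≤ ∑ i ∈ s, u i := sum_le_sum_of_subset_of_nonneg hts fun i hi _ => h0 i hi
  calc δ * #t * ∑ i ∈ s, u i ^ 2 ≤ δ * #t * (c * ∑ i ∈ s, u i) := by gcongr
    _ = δ * #t * c * ∑ i ∈ s, u i := by ring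
    _ ≤ (∑ i ∈ s, u i) ^ 2 := by
      rw [sq]; exact mul_le_mul_of_nonneg_right hmass (sum_nonneg h0)

lemma cos_profile_nonneg {m n : ℝ} (hm : 0 ≤ m) (hmn : m ≤ n) :
    0 ≤ Real.cos ((m + 1/2) * Real.pi / (2 * n + 1)) := by
  apply Real.cos_nonneg_of_mem_Icc
  constructor
  · have : 0 ≤ (m + 1/2) * Real.pi / (2 * n + 1) :=
      div_nonneg (by positivity) (by linarith)
    linarith [Real.pi_pos]
  · rw [div_le_iff₀ (by linarith)]
    nlinarith [Real.pi_pos]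

lemma half_le_cos_profile {m n : ℝ} (hm : 0 ≤ m) (h : 3 * (2 * m + 1) ≤ 2 * (2 * n + 1)) :
    1/2 ≤ Real.cos ((m + 1/2) * Real.pi / (2 * n + 1)) := by
  have hθ : (m + 1/2) * Real.pi / (2 * n + 1) ≤ Real.pi / 3 := by
    rw [div_le_div_iff₀ (by linarith) (by norm_num)]
    nlinarith [Real.pi_pos]
  calc 1/2 = Real.cos (Real.pi / 3) := Real.cos_pi_div_three.symm
    _ ≤ _ := Real.cos_le_cos_of_nonneg_of_le_pi (div_nonneg (by positivity) (by linarith))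
        (by linarith [Real.pi_pos]) hθ

lemma cos_profile_self {n : ℝ} (hn : 2 * n + 1 ≠ 0) :
    Real.cos ((n + 1/2) * Real.pi / (2 * n + 1)) = 0 := by
  rw [← Real.cos_pi_div_two]
  congr 1
  rw [div_eq_iff hn]
  ring

lemma dirEVZ_ge (m : ℤ) (hm : 0 ≤ m) : 4 / (2 * (m : ℝ) + 1) ^ 2 ≤ dirEVZ m := by
  have hm' : (0 : ℝ) ≤ m := by exact_mod_cast hm
  have hx : |Real.pi / (2 * m + 1)| ≤ Real.pi := by
    rw [abs_of_nonneg (by positivity), div_le_iff₀ (by positivity)]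
    nlinarith [Real.pi_pos]
  have e : 2 * (2 / Real.pi ^ 2 * (Real.pi / (2 * m + 1)) ^ 2) = 4 / (2 * (m : ℝ) + 1) ^ 2 := by
    field_simp; ring
  have := Real.cos_le_one_sub_mul_cos_sq hx
  unfold dirEVZ
  linarith

noncomputable def leftProfile (k : ℕ) (r : ℤ) (A : ℝ) (j : ℤ) : ℝ :=
  if -(k : ℤ) ≤ j ∧ j ≤ r then
    (Real.sqrt A)⁻¹ * Real.cos (((j : ℝ) + (k : ℝ) + 1/2) * Real.pi / (2 * ((k : ℝ) + (r : ℝ)) + 1))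
  else 0

noncomputable def rightProfile (k : ℕ) (r : ℤ) (B : ℝ) (j : ℤ) : ℝ :=
  if r ≤ j ∧ j ≤ (k : ℤ) then
    (Real.sqrt B)⁻¹ * Real.cos (((k : ℝ) - (j : ℝ) + 1/2) * Real.pi / (2 * ((k : ℝ) - (r : ℝ)) + 1))
  else 0

section Profiles

variable (k : ℕ) (r : ℤ) (A : ℝ)

lemma leftProfile_nonneg (j : ℤ) : 0 ≤ leftProfile k r A j := by
  unfold leftProfile
  split_ifs with h
  · have h1 : (-(k : ℤ) : ℝ) ≤ j := by exact_mod_cast h.1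
    have h2 : (j : ℝ) ≤ r := by exact_mod_cast h.2
    push_cast at h1
    exact mul_nonneg (by positivity) (cos_profile_nonneg (by linarith) (by linarith))
  · exact le_rfl

lemma rightProfile_nonneg (j : ℤ) : 0 ≤ rightProfile k r A j := by
  unfold rightProfile
  split_ifs with h
  · have h1 : (r : ℝ) ≤ j := by exact_mod_cast h.1
    have h2 : (j : ℝ) ≤ k := by exact_mod_cast h.2
    exact mul_nonneg (by positivity) (cos_profile_nonneg (by linarith) (by linarith))
  · exact le_rfl

lemma leftProfile_le (j : ℤ) : leftProfile k r A j ≤ (Real.sqrt A)⁻¹ := by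
  unfold leftProfile
  split_ifs
  · exact mul_le_of_le_one_right (by positivity) (Real.cos_le_one _)
  · positivity

lemma half_mul_le_leftProfile {j : ℤ} (hj : -(k : ℤ) ≤ j)
    (h : 3 * (2 * (j + k) + 1) ≤ 2 * (2 * (k + r) + 1)) :
    1/2 * (Real.sqrt A)⁻¹ ≤ leftProfile k r A j := by
  have hjR : (-(k : ℤ) : ℝ) ≤ j := by exact_mod_cast hj
  have hR : ((3 * (2 * (j + k) + 1) : ℤ) : ℝ) ≤ ((2 * (2 * (k + r) + 1) : ℤ) : ℝ) := by
    exact_mod_cast h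
  push_cast at hjR hR
  rw [leftProfile, if_pos ⟨hj, by omega⟩, mul_comm]
  exact mul_le_mul_of_nonneg_left (half_le_cos_profile (by linarith) hR) (by positivity)

lemma leftProfile_mul_rightProfile {r' : ℤ} (hr : r ≤ r') (B : ℝ) (j : ℤ) :
    leftProfile k r A j * rightProfile k r' B j = 0 := by
  unfold leftProfile rightProfile
  split_ifs with hl hr'
  · obtain rfl : j = r := by omega
    rw [add_comm (j : ℝ), cos_profile_self, mul_zero, zero_mul]
    have : (-(k : ℤ) : ℝ) ≤ j := by exact_mod_cast hl.1
    push_cast at this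
    linarith
  all_goals simp

lemma sq_sum_leftProfile_ge (hk : 2 ≤ k) (hr : -(k : ℤ) ≤ 2 * r)
    (h : ∑ j ∈ Icc (-(k : ℤ)) k, leftProfile k r A j ^ 2 = 1/2) :
    (k : ℝ) / 16 ≤ (∑ j ∈ Icc (-(k : ℤ)) k, leftProfile k r A j) ^ 2 := by
  have hcard : (k : ℝ) / 4 ≤ #(Icc (-(k : ℤ)) (-k + k / 4)) := by
    have : (k : ℤ) ≤ 4 * #(Icc (-(k : ℤ)) (-k + k / 4)) := by rw [Int.card_Icc]; omega
    have : (k : ℝ) ≤ 4 * #(Icc (-(k : ℤ)) (-k + k / 4)) := by exact_mod_cast this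
    linarith
  have hmass := mul_card_mul_sum_sq_le_sq_sum (u := leftProfile k r A) (δ := 1/2)
    (Icc_subset_Icc_right (by omega) : Icc (-(k : ℤ)) (-k + k / 4) ⊆ Icc (-(k : ℤ)) k)
    (by norm_num) (fun j _ => leftProfile_nonneg k r A j) (fun j _ => leftProfile_le k r A j)
    (fun j hj => half_mul_le_leftProfile k r A (mem_Icc.1 hj).1 (by have := mem_Icc.1 hj; omega))
  rw [h] at hmass
  linarith

variable {k r A} {r' : ℤ} {B : ℝ}

lemma sum_sq_leftProfile_add_rightProfile (hr : r ≤ r')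
    (hA : ∑ j ∈ Icc (-(k : ℤ)) k, leftProfile k r A j ^ 2 = 1/2)
    (hB : ∑ j ∈ Icc (-(k : ℤ)) k, rightProfile k r' B j ^ 2 = 1/2) :
    ∑ j ∈ Icc (-(k : ℤ)) k, (leftProfile k r A j + rightProfile k r' B j) ^ 2 = 1 := by
  rw [sum_add_sq_of_mul_eq_zero _ _ _ fun j _ => leftProfile_mul_rightProfile k r A hr B j, hA, hB]
  norm_num

lemma sq_sum_leftProfile_add_rightProfile_ge (hk : 2 ≤ k) (hr : -(k : ℤ) ≤ 2 * r)
    (hA : ∑ j ∈ Icc (-(k : ℤ)) k, leftProfile k r A j ^ 2 = 1/2) :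
    (k : ℝ) / 16 ≤ (∑ j ∈ Icc (-(k : ℤ)) k, (leftProfile k r A j + rightProfile k r' B j)) ^ 2 :=
  (sq_sum_leftProfile_ge k r A hk hr hA).trans <| pow_le_pow_left₀
    (sum_nonneg fun j _ => leftProfile_nonneg k r A j)
    (sum_le_sum fun j _ => le_add_of_nonneg_right (rightProfile_nonneg k r' B j)) 2

end Profiles

lemma inv_mul_inv_le_of_mixing_bounds {κ k x D T b : ℝ} (hκ : 0 < κ) (hk : 1 ≤ k) (hx : 0 ≤ x)
    (hD : 4 / (2 * k + 1) ^ 2 ≤ D) (hT : k / 16 ≤ T ^ 2)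
    (hb : min (1/2) (2 * (x * (D / κ)) * T ^ 2) ≤ b) (hK : (2 * k + 1) * (x * (D / κ)) ≤ 1) :
    1 / (18 * κ) * x * k⁻¹ ≤ b := by
  have hk0 : 0 < k := by linarith
  have hsq : (2 * k + 1) ^ 2 ≤ 9 * k ^ 2 := by nlinarith
  have hD' : 4 / (9 * k ^ 2) ≤ D :=
    (div_le_div_of_nonneg_left (by norm_num) (by positivity) hsq).trans hD
  have hgoal : 1 / (18 * κ) * x * k⁻¹ = x * (4 / (9 * k ^ 2)) / κ * k / 8 := by
    field_simp; ring
  rw [hgoal]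
  rcases min_le_iff.1 hb with hb | hb
  · have hxD : x * (4 / (9 * k ^ 2)) / κ * (2 * k + 1) ≤ 1 := by
      calc x * (4 / (9 * k ^ 2)) / κ * (2 * k + 1) ≤ x * D / κ * (2 * k + 1) := by gcongr
        _ ≤ 1 := by rw [mul_div_assoc]; linarith
    have : x * (4 / (9 * k ^ 2)) / κ * k ≤ 1 := by
      nlinarith [show 0 ≤ x * (4 / (9 * k ^ 2)) / κ by positivity]
    linarith
  · have hD0 : 0 ≤ D := le_trans (by positivity) hD'
    calc x * (4 / (9 * k ^ 2)) / κ * k / 8 ≤ x * D / κ * k / 8 := by gcongr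
      _ = 2 * (x * (D / κ)) * (k / 16) := by ring
      _ ≤ 2 * (x * (D / κ)) * T ^ 2 := by gcongr
      _ ≤ b := hb

/-- lower bound on the mixing coefficient: there is `c > 0` independent of
`k` and `α` such that `b_k ≥ c (Σ_{j∈J} α_j)⁻¹ k⁻¹` for all but finitely many `k`, where
`b_k ∈ (0,1]` is the normalization coefficient of the trial state in the upper bound for
`λ_0(V_k, α)`. -/
theorem stmt17 (ε : ℝ) (hε : 0 < ε) :
    ∃ c : ℝ, 0 < c ∧
      ∀ (α : ℤ → ℝ) (J : Finset ℤ) (hne : J.Nonempty),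
        (∀ j : ℤ, α j ≠ 0 ↔ j ∈ J) → (∀ j ∈ J, 0 < α j) →
        ∀ᶠ k : ℕ in atTop,
          ∀ (rmin rmax : ℤ), rmin = J.min' hne → rmax = J.max' hne →
          ∀ (A B : ℝ), 0 < A → 0 < B →
          ∀ cL cR : ℤ → ℝ,
          (∀ j : ℤ, cL j =
            if -(k : ℤ) ≤ j ∧ j ≤ rmin then
              (Real.sqrt A)⁻¹ *
                Real.cos (((j : ℝ) + (k : ℝ) + 1/2) * Real.pi / (2 * ((k : ℝ) + (rmin : ℝ)) + 1))
            else 0) →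
          (∀ j : ℤ, cR j =
            if rmax ≤ j ∧ j ≤ (k : ℤ) then
              (Real.sqrt B)⁻¹ *
                Real.cos (((k : ℝ) - (j : ℝ) + 1/2) * Real.pi / (2 * ((k : ℝ) - (rmax : ℝ)) + 1))
            else 0) →
          (∑ j ∈ Finset.Icc (-(k : ℤ)) (k : ℤ), cL j ^ 2 = 1/2) →
          (∑ j ∈ Finset.Icc (-(k : ℤ)) (k : ℤ), cR j ^ 2 = 1/2) →
          ∀ b : ℝ, 0 < b → b ≤ 1 →
          (∑ i : Fin (2*k+1),
            (Real.sqrt (1 - b) * (cL ((i : ℤ) - k) + cR ((i : ℤ) - k)) +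
              (Real.sqrt (∑ j ∈ J, α j))⁻¹ * Real.sqrt b *
                Real.sqrt (dirEVZ k / (2 + ε))) ^ 2 = 1) →
          c * (∑ j ∈ J, α j)⁻¹ * (k : ℝ)⁻¹ ≤ b := by
  refine ⟨1 / (18 * (2 + ε)), by positivity, ?_⟩
  intro α J hne _ hpos
  filter_upwards [eventually_ge_atTop (2 * (J.min' hne).natAbs + 2)] with k hk
  rintro rmin rmax rfl rfl A B - - cL cR hcL hcR hL2 hR2 b hb0 hb1 hnorm
  obtain rfl : cL = leftProfile k (J.min' hne) A := funext hcL
  obtain rfl : cR = rightProfile k (J.max' hne) B := funext hcR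
  set S := ∑ j ∈ J, α j
  set β := (Real.sqrt S)⁻¹ * Real.sqrt b * Real.sqrt (dirEVZ k / (2 + ε))
  have hS : 0 < S := sum_pos hpos hne
  have hD : 4 / (2 * (k : ℝ) + 1) ^ 2 ≤ dirEVZ k := by simpa using dirEVZ_ge k (by positivity)
  have hβ : β ^ 2 = b * (S⁻¹ * (dirEVZ k / (2 + ε))) := by
    rw [mul_pow, mul_pow, inv_pow, Real.sq_sqrt hS.le, Real.sq_sqrt hb0.le,
      Real.sq_sqrt (div_nonneg (le_trans (by positivity) hD) (by linarith))]
    ring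
  have hmix := mixing_equation _ _ hb1
    (sum_sq_leftProfile_add_rightProfile (J.min'_le _ (J.max'_mem hne)) hL2 hR2)
    ((sum_fin_eq_sum_Icc k _).symm.trans hnorm)
  have hcard : #(Icc (-(k : ℤ)) k) = 2 * k + 1 := by rw [Int.card_Icc]; omega
  rw [hcard, Nat.cast_add, Nat.cast_mul, Nat.cast_ofNat, Nat.cast_one] at hmix
  obtain ⟨hmin, hK⟩ := mixing_bounds hb0 (sum_nonneg fun j _ => add_nonneg
    (leftProfile_nonneg k _ A j) (rightProfile_nonneg k _ B j)) (by positivity) (by positivity)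
    hβ hmix
  exact inv_mul_inv_le_of_mixing_bounds (by linarith) (by norm_cast; omega) (inv_nonneg.2 hS.le)
    hD (sq_sum_leftProfile_add_rightProfile_ge (by omega) (by omega) hL2) hmin hK
end

section
/- Sharp cubic decay of the spectral gap for a single-site potential (Corollary 4.3, proving the conjecture of Kim–Yoo): for H_{k,α} = L_k + α δ_0 with any α > 0, there exist constants c_1, c_2 > 0 independent of k and α such that c_1/α ≤ |V_k|³ · Γ(V_k, α) ≤ c_2/α for all but finitely many k. -/
open Finset Filter Topology Matrix

/-!
Write an eigenvalue as `μ = 2 - 2 cos ψ`. Off the centre an eigenvector solves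
`f (j+1) + f (j-1) = 2 cos ψ f j`, and the reflecting ends force `f j ∝ cos (ψ (j + 1/2))`
counted from either end. For `ψ < θ_k = π/(2k+1)` these profiles do not vanish at the centre,
so the eigenvector is symmetric and the centre equation becomes the secular equation
`2 sin ψ sin ((k + 1/2) ψ) = α cos ((k + 1/2) ψ)`, which has exactly one root `φ ∈ (0, θ_k)`.
A maximum principle makes the spectrum nonnegative, and `cos (θ_k (j + 1/2))` vanishes at the
centre, giving the eigenvalue `2 - 2 cos θ_k = λ₀(V_k, ∞δ₀)`. Hence `λ₀ = 2 - 2 cos φ`,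
`λ₁ = 2 - 2 cos θ_k` and `Γ ≍ θ_k (θ_k - φ)`. With `x = (k + 1/2)(θ_k - φ)` the secular equation
reads `2 sin φ cos x = α sin x`, and Jordan's inequality gives `α (k + 1/2)² (θ_k - φ) ≍ 1`
once `α k` is large, whence `|V_k|³ Γ ≍ 1/α`.
-/

open Real

namespace SingleSiteGap

/-- Indices are clamped to `[0, n]`; with truncated subtraction, `reflExt f (i - 1)` and
`reflExt f (i + 1)` are the neighbours of `i` under the reflecting (Neumann) boundary conditions
`f (-1) = f 0`, `f (n + 1) = f n`. -/
def reflExt {n : ℕ} (f : Fin (n + 1) → ℝ) (j : ℕ) : ℝ := f ⟨min j n, by omega⟩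

lemma reflExt_val {n : ℕ} (f : Fin (n + 1) → ℝ) (i : Fin (n + 1)) : reflExt f i = f i := by
  simp [reflExt, Nat.min_eq_left (Nat.lt_succ_iff.mp i.isLt)]

lemma reflExt_congr {n a b : ℕ} (f : Fin (n + 1) → ℝ) (h : min a n = min b n) :
    reflExt f a = reflExt f b := by
  simp only [reflExt, h]

lemma pathLap_row {n : ℕ} (hn : 1 ≤ n) (i : Fin (n + 1)) :
    pathLap (n + 1) i = 2 • Pi.single i 1 - Pi.single ⟨min (i + 1) n, by omega⟩ 1
      - Pi.single ⟨min (i - 1) n, by omega⟩ 1 := by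
  ext j
  simp only [pathLap, of_apply, Pi.sub_apply, Pi.smul_apply, Pi.single_apply, Fin.ext_iff]
  split_ifs <;> (try norm_num) <;> omega

lemma pathLap_mulVec_apply {n : ℕ} (hn : 1 ≤ n) (f : Fin (n + 1) → ℝ) (i : Fin (n + 1)) :
    (pathLap (n + 1) *ᵥ f) i = 2 * reflExt f i - reflExt f (i + 1) - reflExt f (i - 1) := by
  rw [mulVec, pathLap_row hn, sub_dotProduct, sub_dotProduct, smul_dotProduct, single_dotProduct,
    single_dotProduct, single_dotProduct, reflExt_val]
  simp [reflExt]

variable {k : ℕ}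

lemma Hmat_single0_mulVec_apply (hk : 1 ≤ k) (α : ℝ) (f : Fin (2 * k + 1) → ℝ)
    (i : Fin (2 * k + 1)) :
    (Hmat k (single0 α) *ᵥ f) i =
      (2 + if (i : ℕ) = k then α else 0) * reflExt f i - reflExt f (i + 1)
        - reflExt f (i - 1) := by
  have hpot : single0 α ((i : ℤ) - k) = if (i : ℕ) = k then α else 0 := by
    simp only [single0, sub_eq_zero, Nat.cast_inj]
  rw [Hmat, add_mulVec, Pi.add_apply, pathLap_mulVec_apply (by omega), potMat, mulVec_diagonal,
    hpot, reflExt_val]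
  ring

lemma Hmat_single0_mulVec_eq_smul_iff (hk : 1 ≤ k) (α μ : ℝ) (f : Fin (2 * k + 1) → ℝ) :
    Hmat k (single0 α) *ᵥ f = μ • f ↔ ∀ i ≤ 2 * k,
      reflExt f (i + 1) + reflExt f (i - 1) = (2 - μ + if i = k then α else 0) * reflExt f i := by
  constructor
  · intro h i hi
    have hi' := congrFun h ⟨i, by omega⟩
    rw [Hmat_single0_mulVec_apply hk, Pi.smul_apply, smul_eq_mul, ← reflExt_val f] at hi'
    linear_combination -hi'
  · intro h
    funext i
    rw [Hmat_single0_mulVec_apply hk, Pi.smul_apply, smul_eq_mul, ← reflExt_val f]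
    linear_combination -h i (by omega)

lemma Hmat_single0_mulVec_eq_smul_of_recurrence (hk : 1 ≤ k) {α μ : ℝ} {g : ℕ → ℝ}
    (htop : g (2 * k + 1) = g (2 * k))
    (hg : ∀ i ≤ 2 * k, g (i + 1) + g (i - 1) = (2 - μ + if i = k then α else 0) * g i) :
    Hmat k (single0 α) *ᵥ (fun i => g i) = μ • fun i : Fin (2 * k + 1) => g i := by
  have hext : ∀ j ≤ 2 * k + 1, reflExt (fun i : Fin (2 * k + 1) => g i) j = g j := by
    intro j hj
    rcases hj.lt_or_eq with hj | rfl
    · simp [reflExt, Nat.min_eq_left (Nat.lt_succ_iff.mp hj)]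
    · simp [reflExt, htop]
  rw [Hmat_single0_mulVec_eq_smul_iff hk]
  intro i hi
  rw [hext i (by omega), hext (i + 1) (by omega), hext (i - 1) (by omega)]
  exact hg i hi

lemma nonneg_of_mem_evs_Hmat_single0 (hk : 1 ≤ k) {α μ : ℝ} (hα : 0 ≤ α)
    (hμ : μ ∈ evs (Hmat k (single0 α))) : 0 ≤ μ := by
  obtain ⟨f, hf0, hf⟩ := hμ
  obtain ⟨i, hi⟩ := Finite.exists_max fun i => |f i|
  have hfi : 0 < |f i| := by
    by_contra! h
    exact hf0 (funext fun j => abs_nonpos_iff.mp ((hi j).trans h))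
  -- maximum principle at a vertex where `|f|` is largest
  have hbound : ∀ j, |reflExt f j| ≤ |f i| := fun j => hi _
  have heq := (Hmat_single0_mulVec_eq_smul_iff hk α μ f).1 hf i (by omega)
  rw [reflExt_val] at heq
  have hle : |2 - μ + if (i : ℕ) = k then α else 0| * |f i| ≤ 2 * |f i| := by
    rw [← abs_mul, ← heq]
    linarith [abs_add_le (reflExt f (i + 1)) (reflExt f (i - 1)), hbound (i + 1),
      hbound (i - 1)]
  have hpot : 0 ≤ if (i : ℕ) = k then α else 0 := by split_ifs <;> simp [hα]
  nlinarith [le_abs_self (2 - μ + if (i : ℕ) = k then α else 0)]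

lemma eqOn_of_recurrence {t : ℝ} {m : ℕ} {u v : ℕ → ℝ}
    (hu : ∀ j < m, u (j + 1) + u (j - 1) = t * u j)
    (hv : ∀ j < m, v (j + 1) + v (j - 1) = t * v j) (h0 : u 0 = v 0) :
    ∀ j ≤ m, u j = v j := by
  intro j
  induction j using Nat.strong_induction_on with
  | _ j ih =>
    intro hj
    rcases j with _ | j
    · exact h0
    · have h1 := ih j (by omega) (by omega)
      have h2 := ih (j - 1) (by omega) (by omega)
      linear_combination hu j (by omega) - hv j (by omega) + t * h1 - h2

noncomputable def neumannMode (ψ : ℝ) (j : ℕ) : ℝ := cos (ψ * (j + 1 / 2))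

lemma neumannMode_zero (ψ : ℝ) : neumannMode ψ 0 = cos (ψ / 2) := by
  rw [neumannMode, Nat.cast_zero, zero_add, mul_one_div]

lemma neumannMode_pred (ψ : ℝ) (j : ℕ) :
    neumannMode ψ (j - 1) = cos (ψ * (j + 1 / 2) - ψ) := by
  rcases j with _ | j
  · rw [neumannMode, ← cos_neg]
    ring_nf
  · simp only [neumannMode, Nat.add_sub_cancel]
    push_cast
    ring_nf

lemma neumannMode_recurrence (ψ : ℝ) (j : ℕ) :
    neumannMode ψ (j + 1) + neumannMode ψ (j - 1) = 2 * cos ψ * neumannMode ψ j := by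
  rw [neumannMode_pred, neumannMode, neumannMode, Nat.cast_succ,
    show ψ * (j + 1 + 1 / 2) = ψ * (j + 1 / 2) + ψ by ring, cos_add, cos_sub]
  ring

noncomputable def theta (k : ℕ) : ℝ := π / (2 * k + 1)

lemma theta_pos (k : ℕ) : 0 < theta k := by
  unfold theta; positivity

lemma theta_mul (k : ℕ) : theta k * (k + 1 / 2) = π / 2 := by
  unfold theta; field_simp

lemma theta_le_pi_div_three (hk : 1 ≤ k) : theta k ≤ π / 3 := by
  unfold theta
  have : (1 : ℝ) ≤ k := by exact_mod_cast hk
  gcongr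
  linarith

lemma neumannMode_pos {ψ : ℝ} (hψ0 : 0 ≤ ψ) (hψ : ψ < theta k) {j : ℕ} (hj : j ≤ k) :
    0 < neumannMode ψ j := by
  have hjk : (j : ℝ) ≤ k := by exact_mod_cast hj
  have hlt : ψ * (j + 1 / 2) < theta k * (k + 1 / 2) := by
    calc ψ * (j + 1 / 2) ≤ ψ * (k + 1 / 2) := by gcongr
      _ < theta k * (k + 1 / 2) := by gcongr
  rw [theta_mul] at hlt
  have hpos : 0 ≤ ψ * (j + 1 / 2) := mul_nonneg hψ0 (by positivity)
  exact cos_pos_of_mem_Ioo ⟨by linarith [pi_pos], hlt⟩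

lemma neumannMode_theta_center (k : ℕ) : neumannMode (theta k) k = 0 := by
  rw [neumannMode, theta_mul, cos_pi_div_two]

lemma neumannMode_theta_top (k : ℕ) :
    neumannMode (theta k) (2 * k + 1) = neumannMode (theta k) (2 * k) := by
  have h := theta_mul k
  simp only [neumannMode]
  push_cast
  rw [show theta k * (2 * k + 1 + 1 / 2) = theta k / 2 + π by linarith,
    show theta k * (2 * k + 1 / 2) = π - theta k / 2 by linarith, cos_add_pi, cos_pi_sub]

noncomputable def secular (k : ℕ) (α ψ : ℝ) : ℝ :=
  2 * sin ψ * sin (ψ * (k + 1 / 2)) - α * cos (ψ * (k + 1 / 2))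

lemma secular_eq_neumannMode (k : ℕ) (α ψ : ℝ) :
    secular k α ψ = 2 * neumannMode ψ (k - 1) - (2 * cos ψ + α) * neumannMode ψ k := by
  rw [neumannMode_pred, neumannMode, secular, cos_sub]
  ring

lemma two_sub_two_cos_theta_mem_evs (hk : 1 ≤ k) (α : ℝ) :
    2 - 2 * cos (theta k) ∈ evs (Hmat k (single0 α)) := by
  refine ⟨fun i => neumannMode (theta k) i, fun h => ?_, ?_⟩
  · have h0 : neumannMode (theta k) 0 = 0 := congrFun h ⟨0, by omega⟩
    rw [neumannMode_zero] at h0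
    exact (cos_pos_of_mem_Ioo ⟨by linarith [pi_pos, theta_pos k],
      by linarith [theta_le_pi_div_three hk, pi_pos]⟩).ne' h0
  · refine Hmat_single0_mulVec_eq_smul_of_recurrence hk (neumannMode_theta_top k) fun i _ => ?_
    rw [neumannMode_recurrence]
    split_ifs with hik
    · rw [hik, neumannMode_theta_center]; ring
    · ring

noncomputable def symMode (k : ℕ) (ψ : ℝ) (j : ℕ) : ℝ := neumannMode ψ (min j (2 * k - j))

lemma two_sub_two_cos_mem_evs_of_secular_eq_zero (hk : 1 ≤ k) {α φ : ℝ} (hφ0 : 0 ≤ φ)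
    (hφ : φ < theta k) (hroot : secular k α φ = 0) :
    2 - 2 * cos φ ∈ evs (Hmat k (single0 α)) := by
  refine ⟨fun i => symMode k φ i, fun h => ?_, ?_⟩
  · have h0 : symMode k φ 0 = 0 := congrFun h ⟨0, by omega⟩
    exact (neumannMode_pos hφ0 hφ (Nat.zero_le k)).ne' h0
  have htop : symMode k φ (2 * k + 1) = symMode k φ (2 * k) := by
    simp only [symMode]; congr 1; omega
  refine Hmat_single0_mulVec_eq_smul_of_recurrence hk htop fun i hi => ?_
  simp only [symMode]
  rcases lt_trichotomy i k with hik | rfl | hik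
  · rw [if_neg hik.ne, min_eq_left (by omega), min_eq_left (by omega), min_eq_left (by omega),
      neumannMode_recurrence]
    ring
  · rw [secular_eq_neumannMode] at hroot
    rw [if_pos rfl, show min (i + 1) (2 * i - (i + 1)) = i - 1 by omega,
      show min (i - 1) (2 * i - (i - 1)) = i - 1 by omega, show min i (2 * i - i) = i by omega]
    linear_combination hroot
  · rw [if_neg hik.ne', show min (i + 1) (2 * k - (i + 1)) = (2 * k - i) - 1 by omega,
      show min (i - 1) (2 * k - (i - 1)) = (2 * k - i) + 1 by omega,
      show min i (2 * k - i) = 2 * k - i by omega, add_comm, neumannMode_recurrence]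
    ring

lemma secular_eq_zero_of_mulVec_eq_smul (hk : 1 ≤ k) {α ψ : ℝ} (hψ0 : 0 ≤ ψ)
    (hψ : ψ < theta k) {f : Fin (2 * k + 1) → ℝ} (hf0 : f ≠ 0)
    (hf : Hmat k (single0 α) *ᵥ f = (2 - 2 * cos ψ) • f) : secular k α ψ = 0 := by
  have heq := (Hmat_single0_mulVec_eq_smul_iff hk α _ f).1 hf
  simp only [sub_sub_cancel] at heq
  set F := reflExt f
  have hc : 0 < cos (ψ / 2) := by
    simpa [neumannMode_zero] using neumannMode_pos hψ0 hψ (Nat.zero_le k)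
  -- both halves of the path solve the same recurrence from their reflecting endpoint
  have hleft : ∀ j ≤ k, F j * cos (ψ / 2) = F 0 * neumannMode ψ j := by
    refine eqOn_of_recurrence (t := 2 * cos ψ) (fun j hj => ?_)
      (fun j _ => by linear_combination F 0 * neumannMode_recurrence ψ j)
      (by rw [neumannMode_zero])
    have := heq j (by omega)
    rw [if_neg (by omega)] at this
    linear_combination cos (ψ / 2) * this
  have hright : ∀ j ≤ k, F (2 * k - j) * cos (ψ / 2) = F (2 * k) * neumannMode ψ j := by
    refine eqOn_of_recurrence (u := fun j => F (2 * k - j) * cos (ψ / 2)) (t := 2 * cos ψ)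
      (fun j hj => ?_)
      (fun j _ => by linear_combination F (2 * k) * neumannMode_recurrence ψ j)
      (by rw [Nat.sub_zero, neumannMode_zero])
    have := heq (2 * k - j) (by omega)
    have hnbr : F (2 * k - j + 1) = F (2 * k - (j - 1)) := reflExt_congr f (by omega)
    rw [if_neg (by omega), hnbr, show 2 * k - j - 1 = 2 * k - (j + 1) by omega] at this
    linear_combination cos (ψ / 2) * this
  have hck := neumannMode_pos hψ0 hψ le_rfl
  have hends : F 0 = F (2 * k) := by
    have h1 := hleft k le_rfl
    have h2 := hright k le_rfl
    rw [show 2 * k - k = k by omega] at h2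
    exact mul_right_cancel₀ hck.ne' (by linarith)
  have hcenter := heq k (by omega)
  rw [if_pos rfl] at hcenter
  have hl := hleft (k - 1) (by omega)
  have hr := hright (k - 1) (by omega)
  rw [show 2 * k - (k - 1) = k + 1 by omega, ← hends] at hr
  have hF0 : F 0 * secular k α ψ = 0 := by
    rw [secular_eq_neumannMode]
    linear_combination -hl - hr + cos (ψ / 2) * hcenter + (2 * cos ψ + α) * hleft k le_rfl
  refine (mul_eq_zero.1 hF0).resolve_left fun h0 => hf0 (funext fun i => ?_)
  rw [Pi.zero_apply, ← reflExt_val f]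
  rcases le_total (i : ℕ) k with hi | hi
  · have := hleft i hi
    rw [h0, zero_mul] at this
    exact (mul_eq_zero.1 this).resolve_right hc.ne'
  · have := hright (2 * k - i) (by omega)
    rw [← hends, h0, zero_mul, show 2 * k - (2 * k - i) = (i : ℕ) by omega] at this
    exact (mul_eq_zero.1 this).resolve_right hc.ne'

lemma secular_strictMonoOn (hk : 1 ≤ k) {α : ℝ} (hα : 0 < α) :
    StrictMonoOn (secular k α) (Set.Icc 0 (theta k)) := by
  have hθ := theta_le_pi_div_three hk
  have hθk := theta_mul k
  have hk0 : (0 : ℝ) ≤ k + 1 / 2 := by positivity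
  intro x ⟨hx0, hxθ⟩ y ⟨hy0, hyθ⟩ hxy
  have hxk : x * (k + 1 / 2) ≤ y * (k + 1 / 2) := by gcongr
  have hyk : y * (k + 1 / 2) ≤ π / 2 := by rw [← hθk]; gcongr
  have hx0k : 0 ≤ x * (k + 1 / 2) := by positivity
  have hsin : sin x < sin y := strictMonoOn_sin ⟨by linarith [pi_pos], by linarith⟩
    ⟨by linarith [pi_pos], by linarith⟩ hxy
  have hsink : sin (x * (k + 1 / 2)) ≤ sin (y * (k + 1 / 2)) :=
    sin_le_sin_of_le_of_le_pi_div_two (by linarith [pi_pos]) hyk hxk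
  have hcosk : cos (y * (k + 1 / 2)) < cos (x * (k + 1 / 2)) :=
    strictAntiOn_cos ⟨hx0k, by linarith [pi_pos]⟩ ⟨by positivity, by linarith [pi_pos]⟩
      (by gcongr)
  have hsx : 0 ≤ sin x := sin_nonneg_of_nonneg_of_le_pi hx0 (by linarith [pi_pos])
  have hsxk : 0 ≤ sin (x * (k + 1 / 2)) :=
    sin_nonneg_of_nonneg_of_le_pi hx0k (by linarith [pi_pos])
  have hprod : sin x * sin (x * (k + 1 / 2)) ≤ sin y * sin (y * (k + 1 / 2)) :=
    mul_le_mul hsin.le hsink hsxk (by linarith)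
  simp only [secular]
  linarith [mul_lt_mul_of_pos_left hcosk hα]

lemma exists_secular_eq_zero (hk : 1 ≤ k) {α : ℝ} (hα : 0 < α) :
    ∃ φ ∈ Set.Ioo 0 (theta k), secular k α φ = 0 := by
  have hcont : ContinuousOn (secular k α) (Set.Icc 0 (theta k)) := by
    unfold secular; fun_prop
  have hθ : secular k α (theta k) = 2 * sin (theta k) := by
    rw [secular, theta_mul, sin_pi_div_two, cos_pi_div_two]; ring
  have hsin : 0 < sin (theta k) :=
    sin_pos_of_pos_of_lt_pi (theta_pos k) (by linarith [theta_le_pi_div_three hk, pi_pos])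
  have h0 : secular k α 0 = -α := by simp [secular]
  have hmem : (0 : ℝ) ∈ Set.Ioo (secular k α 0) (secular k α (theta k)) := by
    rw [h0, hθ]; exact ⟨by linarith, by linarith⟩
  exact intermediate_value_Ioo (theta_pos k).le hcont hmem

lemma gap_eq_of_evs {n : ℕ} {M : Matrix (Fin n) (Fin n) ℝ} {a b : ℝ} (ha : a ∈ evs M)
    (hb : b ∈ evs M) (hab : a < b) (h : ∀ μ ∈ evs M, μ = a ∨ b ≤ μ) : gap M = b - a := by
  have h0 : lam0 M = a :=
    IsLeast.csInf_eq ⟨ha, fun μ hμ => (h μ hμ).elim ge_of_eq fun hμ => hab.le.trans hμ⟩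
  have h1 : lam1 M = b := by
    rw [lam1, h0]
    exact IsLeast.csInf_eq ⟨⟨hb, hab.ne'⟩, fun μ hμ => (h μ hμ.1).resolve_left hμ.2⟩
  rw [gap, h0, h1]

lemma gap_Hmat_single0 (hk : 1 ≤ k) {α φ : ℝ} (hα : 0 < α) (hφ : φ ∈ Set.Ioo 0 (theta k))
    (hroot : secular k α φ = 0) :
    gap (Hmat k (single0 α)) = 2 * cos φ - 2 * cos (theta k) := by
  have hθ := theta_le_pi_div_three hk
  have hcos : cos (theta k) < cos φ := strictAntiOn_cos ⟨hφ.1.le, by linarith [hφ.2, pi_pos]⟩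
    ⟨(theta_pos k).le, by linarith [pi_pos]⟩ hφ.2
  rw [gap_eq_of_evs (two_sub_two_cos_mem_evs_of_secular_eq_zero hk hφ.1.le hφ.2 hroot)
    (two_sub_two_cos_theta_mem_evs hk α) (by linarith) fun μ hμ => ?_]
  · ring
  rcases le_or_gt (2 - 2 * cos (theta k)) μ with hle | hlt
  · exact Or.inr hle
  left
  have hμ0 := nonneg_of_mem_evs_Hmat_single0 hk hα.le hμ
  set ψ := arccos (1 - μ / 2)
  have hcosψ : cos ψ = 1 - μ / 2 :=
    cos_arccos (by linarith [neg_one_le_cos (theta k)]) (by linarith)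
  have hψθ : ψ < theta k := by
    by_contra! h
    have := cos_le_cos_of_nonneg_of_le_pi (theta_pos k).le (arccos_le_pi _) h
    linarith
  obtain ⟨f, hf0, hf⟩ := hμ
  rw [show μ = 2 - 2 * cos ψ by linarith] at hf ⊢
  have hψ0 : 0 ≤ ψ := arccos_nonneg _
  have hψroot : secular k α ψ = 0 := secular_eq_zero_of_mulVec_eq_smul hk hψ0 hψθ hf0 hf
  rw [(secular_strictMonoOn hk hα).injOn ⟨hψ0, hψθ.le⟩ ⟨hφ.1.le, hφ.2.le⟩
    (hψroot.trans hroot.symm)]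

lemma two_cos_sub_two_cos_eq (φ θ : ℝ) :
    2 * cos φ - 2 * cos θ = 4 * sin ((θ + φ) / 2) * sin ((θ - φ) / 2) := by
  have h := cos_sub_cos φ θ
  rw [show (φ - θ) / 2 = -((θ - φ) / 2) by ring, sin_neg, add_comm] at h
  linear_combination 2 * h

lemma two_cos_sub_two_cos_le {φ θ : ℝ} (hφ : 0 ≤ φ) (hφθ : φ ≤ θ) (hθ : θ ≤ π) :
    2 * cos φ - 2 * cos θ ≤ 2 * θ * (θ - φ) := by
  rw [two_cos_sub_two_cos_eq]
  have h1 : sin ((θ + φ) / 2) ≤ θ := (sin_le (by linarith)).trans (by linarith)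
  have h2 : sin ((θ - φ) / 2) ≤ (θ - φ) / 2 := sin_le (by linarith)
  have h2' : 0 ≤ sin ((θ - φ) / 2) := sin_nonneg_of_nonneg_of_le_pi (by linarith) (by linarith)
  nlinarith [mul_le_mul h1 h2 h2' (by linarith)]

lemma le_two_cos_sub_two_cos {φ θ : ℝ} (hφ : 0 ≤ φ) (hφθ : φ ≤ θ) (hθ : θ ≤ π / 2) :
    4 / π ^ 2 * θ * (θ - φ) ≤ 2 * cos φ - 2 * cos θ := by
  rw [two_cos_sub_two_cos_eq]
  have h1 := mul_le_sin (x := (θ + φ) / 2) (by linarith) (by linarith)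
  have h2 := mul_le_sin (x := (θ - φ) / 2) (by linarith) (by linarith)
  have h1' : θ / π ≤ 2 / π * ((θ + φ) / 2) := by
    rw [div_mul_eq_mul_div]; gcongr; linarith
  have := mul_le_mul (h1'.trans h1) h2
    (mul_nonneg (div_nonneg zero_le_two pi_pos.le) (by linarith))
    (sin_nonneg_of_nonneg_of_le_pi (by linarith) (by linarith [pi_pos]))
  have e : 4 / π ^ 2 * θ * (θ - φ) = 4 * (θ / π * (2 / π * ((θ - φ) / 2))) := by
    field_simp
  linarith

lemma secular_eq_zero_iff {α φ : ℝ} :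
    secular k α φ = 0 ↔
      2 * sin φ * cos ((theta k - φ) * (k + 1 / 2)) = α * sin ((theta k - φ) * (k + 1 / 2)) := by
  rw [sub_mul, theta_mul, cos_pi_div_two_sub, sin_pi_div_two_sub, secular, sub_eq_zero]

lemma mul_le_pi_mul_of_sin_cos_eq {α φ x : ℝ} (hα : 0 ≤ α) (hφ : 0 ≤ φ) (hφπ : φ ≤ π)
    (hx0 : 0 ≤ x) (hx : x ≤ π / 2) (h : 2 * sin φ * cos x = α * sin x) : α * x ≤ π * φ := by
  have hjordan := mul_le_sin hx0 hx
  have hsin : sin φ * cos x ≤ φ :=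
    calc sin φ * cos x ≤ sin φ * 1 :=
          mul_le_mul_of_nonneg_left (cos_le_one x) (sin_nonneg_of_nonneg_of_le_pi hφ hφπ)
      _ ≤ φ := by rw [mul_one]; exact sin_le hφ
  have : α * (2 / π * x) ≤ 2 * φ := by nlinarith [mul_le_mul_of_nonneg_left hjordan hα]
  rw [div_mul_eq_mul_div, mul_div_assoc', div_le_iff₀ pi_pos] at this
  linarith

lemma two_mul_le_pi_mul_of_sin_cos_eq {α φ x : ℝ} (hα : 0 ≤ α) (hφ : 0 ≤ φ) (hφπ : φ ≤ π / 2)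
    (hx0 : 0 ≤ x) (hx : x ≤ 1) (h : 2 * sin φ * cos x = α * sin x) : 2 * φ ≤ π * (α * x) := by
  have hcos : 1 / 2 ≤ cos x := by nlinarith [one_sub_sq_div_two_le_cos (x := x)]
  have hjordan := mul_le_sin hφ hφπ
  have hsin : sin φ ≤ α * x :=
    calc sin φ ≤ 2 * sin φ * cos x := by
          nlinarith [sin_nonneg_of_nonneg_of_le_pi hφ (by linarith [pi_pos])]
      _ = α * sin x := h
      _ ≤ α * x := mul_le_mul_of_nonneg_left (sin_le hx0) hα
  rw [div_mul_eq_mul_div, div_le_iff₀ pi_pos] at hjordan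
  linarith [mul_le_mul_of_nonneg_right hsin pi_pos.le]

section RootAsymptotics

variable {m θ φ α : ℝ}

lemma cube_mul_two_cos_sub_le (hm : 0 < m) (hθm : θ * m = π / 2) (hθ : θ ≤ π)
    (hφ0 : 0 < φ) (hφθ : φ < θ) (hα : 0 < α)
    (hroot : 2 * sin φ * cos ((θ - φ) * m) = α * sin ((θ - φ) * m)) :
    (2 * m) ^ 3 * (2 * cos φ - 2 * cos θ) ≤ 4 * π ^ 3 / α := by
  have hδm : (θ - φ) * m ≤ π / 2 := by rw [← hθm]; gcongr; linarith
  have hx : α * ((θ - φ) * m) ≤ π * θ :=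
    (mul_le_pi_mul_of_sin_cos_eq hα.le hφ0.le (by linarith [pi_pos]) (by nlinarith) hδm
      hroot).trans (by gcongr)
  have hgap := two_cos_sub_two_cos_le hφ0.le hφθ.le (by linarith [pi_pos])
  rw [le_div_iff₀ hα]
  calc (2 * m) ^ 3 * (2 * cos φ - 2 * cos θ) * α ≤ (2 * m) ^ 3 * (2 * θ * (θ - φ)) * α := by
        gcongr
    _ = 16 * m ^ 2 * θ * (α * ((θ - φ) * m)) := by ring
    _ ≤ 16 * m ^ 2 * θ * (π * θ) :=
        mul_le_mul_of_nonneg_left hx (mul_nonneg (by positivity) (hφ0.trans hφθ).le)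
    _ = 16 * π * (θ * m) ^ 2 := by ring
    _ = 4 * π ^ 3 := by rw [hθm]; ring

lemma le_cube_mul_two_cos_sub (hm : 0 < m) (hθm : θ * m = π / 2) (hθ : θ ≤ π / 2)
    (hφ0 : 0 < φ) (hφθ : φ < θ) (hα : 0 < α) (h13 : 13 ≤ 2 * α * m)
    (hroot : 2 * sin φ * cos ((θ - φ) * m) = α * sin ((θ - φ) * m)) :
    8 / (π * α) ≤ (2 * m) ^ 3 * (2 * cos φ - 2 * cos θ) := by
  have hπ := pi_lt_d2
  have hδm : (θ - φ) * m ≤ π / 2 := by rw [← hθm]; gcongr; linarith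
  have hx : α * ((θ - φ) * m) ≤ π * θ :=
    (mul_le_pi_mul_of_sin_cos_eq hα.le hφ0.le (by linarith [pi_pos]) (by nlinarith) hδm
      hroot).trans (by gcongr)
  -- `α m ≥ 13/2` forces `(θ - φ) m ≤ 1` and `φ ≥ θ/2`
  have hmx : (θ - φ) * m * (2 * α * m) ≤ π ^ 2 := by nlinarith
  have hx1 : (θ - φ) * m ≤ 1 := by nlinarith
  have hφhalf : θ ≤ 2 * φ := by nlinarith
  have hlow : θ ≤ π * (α * ((θ - φ) * m)) :=
    hφhalf.trans (two_mul_le_pi_mul_of_sin_cos_eq hα.le hφ0.le (by linarith) (by nlinarith) hx1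
      hroot)
  have hgap := le_two_cos_sub_two_cos hφ0.le hφθ.le hθ
  have hπ2 : π = 2 * (θ * m) := by linarith
  rw [div_le_iff₀ (by positivity)]
  calc 8 = 16 * m * θ / π := by field_simp; linarith
    _ ≤ 16 * m * (π * (α * ((θ - φ) * m))) / π := by gcongr
    _ = (2 * m) ^ 3 * (4 / π ^ 2 * θ * (θ - φ)) * (π * α) := by
        rw [hπ2]
        field_simp
        ring
    _ ≤ (2 * m) ^ 3 * (2 * cos φ - 2 * cos θ) * (π * α) := by gcongr

end RootAsymptotics

end SingleSiteGap

open SingleSiteGap in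
/-- Corollary 4.3, conjecture of Kim–Yoo: for `H_{k,α} = L_k + α δ_0` with
any `α > 0` there are constants `c₁, c₂ > 0` independent of `k` and `α` such that for all
but finitely many `k`, `c₁/α ≤ |V_k|³ Γ(V_k, α) ≤ c₂/α`. -/
theorem stmt19 :
    ∃ c₁ c₂ : ℝ, 0 < c₁ ∧ 0 < c₂ ∧ ∀ α : ℝ, 0 < α → ∀ᶠ k : ℕ in atTop,
      c₁ / α ≤ (2 * (k : ℝ) + 1) ^ 3 * gap (Hmat k (single0 α)) ∧
      (2 * (k : ℝ) + 1) ^ 3 * gap (Hmat k (single0 α)) ≤ c₂ / α := by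
  refine ⟨2, 125, by norm_num, by norm_num, fun α hα => ?_⟩
  filter_upwards [eventually_ge_atTop 1, eventually_ge_atTop ⌈13 / α⌉₊] with k hk hkα
  have h13 : 13 ≤ 2 * α * (k + 1 / 2) := by
    have := (div_le_iff₀' hα).1 ((Nat.le_ceil _).trans (Nat.cast_le.2 hkα))
    nlinarith
  obtain ⟨φ, ⟨hφ0, hφθ⟩, hroot⟩ := exists_secular_eq_zero hk hα
  have hm : (0 : ℝ) < k + 1 / 2 := by positivity
  have hθ : theta k ≤ π / 2 := by linarith [theta_le_pi_div_three hk, pi_pos]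
  rw [gap_Hmat_single0 hk hα ⟨hφ0, hφθ⟩ hroot, show 2 * (k : ℝ) + 1 = 2 * (k + 1 / 2) by ring]
  constructor
  · calc 2 / α ≤ 8 / (π * α) := by
          rw [div_le_div_iff₀ hα (by positivity)]; nlinarith [pi_lt_d2]
      _ ≤ _ := le_cube_mul_two_cos_sub hm (theta_mul k) hθ hφ0 hφθ hα h13
          (secular_eq_zero_iff.1 hroot)
  · calc _ ≤ 4 * π ^ 3 / α := cube_mul_two_cos_sub_le hm (theta_mul k) (by linarith [pi_pos])
          hφ0 hφθ hα (secular_eq_zero_iff.1 hroot)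
      _ ≤ 125 / α := by
          have := pow_lt_pow_left₀ pi_lt_d4 pi_pos.le (by norm_num : 3 ≠ 0)
          gcongr
          norm_num at this
          linarith
end
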